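/- arXiv:1511.06967 — 9 statements merged into one kernel-verified Lean document; each statement's English description precedes it below -/
import Mathlib

section
/- If a Noetherian local ring (A, m) has the Artin approximation property (every finite system of polynomial equations over A with a solution in the m-adic completion Â has, for every c, a solution in A congruent to the given one modulo m^c), then A is Henselian. -/
open IsLocalRing

/-- The `m`-adic completion of a local ring. -/
noncomputable abbrev AdicCompl (A : Type*) [CommRing A] [IsLocalRing A] :=
  AdicCompletion (maximalIdeal A) A

/-- A Noetherian local ring `(A, m)` has the Artin approximation property if every finite
system of polynomial equations over `A` which has a solution in the `m`-adic completion `Â`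
has, for every `c`, a solution in `A` congruent to the given one modulo `m^c Â`. -/
def HasArtinApprox (A : Type*) [CommRing A] [IsLocalRing A] : Prop :=
  ∀ (n q : ℕ) (f : Fin q → MvPolynomial (Fin n) A) (yh : Fin n → AdicCompl A),
    (∀ i, MvPolynomial.aeval yh (f i) = 0) →
    ∀ c : ℕ, ∃ y : Fin n → A,
      (∀ i, MvPolynomial.aeval y (f i) = 0) ∧
      ∀ j, algebraMap A (AdicCompl A) (y j) - yh j ∈
        Ideal.map (algebraMap A (AdicCompl A)) (maximalIdeal A ^ c)

section Aux

variable {A : Type*} [CommRing A] (I : Ideal A)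

/-- Evaluation of an adic Cauchy sequence at index `n`, as an algebra homomorphism. -/
def evalSeq (n : ℕ) : AdicCompletion.AdicCauchySequence I A →ₐ[A] A where
  toFun s := s.val n
  map_one' := rfl
  map_mul' _ _ := rfl
  map_zero' := rfl
  map_add' _ _ := rfl
  commutes' _ := rfl

@[simp] lemma evalSeq_apply (n : ℕ) (s : AdicCompletion.AdicCauchySequence I A) :
    evalSeq I n s = s.val n := rfl

end Aux

open Polynomial in
/-- If a Noetherian local ring has the Artin approximation property, then it is Henselian. -/
theorem henselian_of_hasArtinApprox (A : Type*) [CommRing A] [IsLocalRing A]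
    [IsNoetherianRing A] (h : HasArtinApprox A) : HenselianLocalRing A := by
  classical
  set I := maximalIdeal A with hI
  refine { is_henselian := ?_ }
  intro f hf a₀ h₁ h₂
  let f' := derivative f
  -- Newton iteration sequence, as in mathlib's `IsAdicComplete.henselianRing`.
  let c : ℕ → A := fun n => Nat.recOn n a₀ fun _ b => b - f.eval b * Ring.inverse (f'.eval b)
  have hc : ∀ n, c (n + 1) = c n - f.eval (c n) * Ring.inverse (f'.eval (c n)) := by
    intro n
    simp only [c, Nat.rec_add_one]
  have hc_mod : ∀ n, c n ≡ a₀ [SMOD I] := by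
    intro n
    induction' n with n ih
    · rfl
    rw [hc, sub_eq_add_neg, ← add_zero a₀]
    refine ih.add ?_
    rw [SModEq.zero, Ideal.neg_mem_iff]
    refine I.mul_mem_right _ ?_
    rw [← SModEq.zero] at h₁ ⊢
    exact (ih.eval f).trans h₁
  have hf'c : ∀ n, IsUnit (f'.eval (c n)) := by
    intro n
    by_contra hn
    have hm : f'.eval (c n) ∈ I := (IsLocalRing.mem_maximalIdeal _).mpr hn
    have hsub : f'.eval (c n) - f'.eval a₀ ∈ I := SModEq.sub_mem.mp ((hc_mod n).eval f')
    have : f'.eval a₀ ∈ I := by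
      have := I.sub_mem hm hsub
      simpa using this
    exact (IsLocalRing.mem_maximalIdeal _).mp this h₂
  have hfcI : ∀ n, f.eval (c n) ∈ I ^ (n + 1) := by
    intro n
    induction' n with n ih
    · rw [zero_add, pow_one]; exact h₁
    rw [← taylor_eval_sub (c n), hc, sub_eq_add_neg, sub_eq_add_neg,
      add_neg_cancel_comm]
    rw [eval_eq_sum, sum_over_range' _ _ _ (lt_add_of_pos_right _ zero_lt_two), ←
      Finset.sum_range_add_sum_Ico _ (Nat.le_add_left _ _)]
    swap
    · intro i
      rw [zero_mul]
    refine Ideal.add_mem _ ?_ ?_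
    · erw [Finset.sum_range_succ]
      rw [Finset.range_one, Finset.sum_singleton,
        taylor_coeff_zero, taylor_coeff_one, pow_zero, pow_one, mul_one, mul_neg,
        mul_left_comm, Ring.mul_inverse_cancel _ (hf'c n), mul_one, add_neg_cancel]
      exact Ideal.zero_mem _
    · refine Submodule.sum_mem _ ?_
      simp only [Finset.mem_Ico]
      rintro i ⟨h2i, _⟩
      have aux : n + 2 ≤ i * (n + 1) := by trans 2 * (n + 1) <;> nlinarith only [h2i]
      refine Ideal.mul_mem_left _ _ (Ideal.pow_le_pow_right aux ?_)
      rw [pow_mul']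
      exact Ideal.pow_mem_pow ((Ideal.neg_mem_iff _).2 <| Ideal.mul_mem_right _ _ ih) _
  have aux : ∀ m n, m ≤ n → c m ≡ c n [SMOD (I ^ m • ⊤ : Ideal A)] := by
    intro m n hmn
    rw [← Ideal.one_eq_top, Ideal.smul_eq_mul, mul_one]
    obtain ⟨k, rfl⟩ := Nat.exists_eq_add_of_le hmn
    clear hmn
    induction' k with k ih
    · rw [add_zero]
    rw [← add_assoc, hc, ← add_zero (c m), sub_eq_add_neg]
    refine ih.add ?_
    symm
    rw [SModEq.zero, Ideal.neg_mem_iff]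
    refine Ideal.mul_mem_right _ _ (Ideal.pow_le_pow_right ?_ (hfcI _))
    rw [add_assoc]
    exact le_self_add
  -- the Cauchy sequence and its image in the completion
  let cs : AdicCompletion.AdicCauchySequence I A := ⟨c, fun {m n} hmn => aux m n hmn⟩
  let yh : AdicCompl A := AdicCompletion.mkₐ I cs
  have hseq : ∀ n, (Polynomial.aeval cs f).val n = f.eval (c n) := by
    intro n
    have := Polynomial.aeval_algHom_apply (evalSeq I n) cs f
    simp only [evalSeq_apply] at this
    rw [← this]
    simp [Polynomial.aeval_def, Polynomial.eval₂_eq_eval_map, Polynomial.map_id]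
    rfl
  have hsmul_top : ∀ n : ℕ, (I ^ n • ⊤ : Ideal A) = I ^ n := by
    intro n; ext x; simp
  -- `yh` is a root of `f` in the completion
  have hroot : Polynomial.aeval yh f = 0 := by
    have h1 : Polynomial.aeval yh f = AdicCompletion.mkₐ I (Polynomial.aeval cs f) :=
      Polynomial.aeval_algHom_apply (AdicCompletion.mkₐ I) cs f
    rw [h1]
    have : AdicCompletion.mkₐ I (Polynomial.aeval cs f)
        = AdicCompletion.mk I A (Polynomial.aeval cs f) := rfl
    rw [this]
    apply AdicCompletion.mk_zero_of
    refine ⟨0, fun n _ => ⟨n, le_rfl, n, le_rfl, ?_⟩⟩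
    rw [show ((Polynomial.aeval cs f : AdicCompletion.AdicCauchySequence I A) : ℕ → A) n
        = (Polynomial.aeval cs f).val n from rfl, hseq n, hsmul_top n]
    exact Ideal.pow_le_pow_right (Nat.le_succ n) (hfcI n)
  -- set up the system of equations for Artin approximation
  let F : MvPolynomial (Fin 1) A := Polynomial.aeval (MvPolynomial.X 0) f
  have hFy : ∀ i : Fin 1, MvPolynomial.aeval (fun _ : Fin 1 => yh) F = 0 := by
    intro _
    have := Polynomial.aeval_algHom_apply
      (MvPolynomial.aeval (fun _ : Fin 1 => yh) : MvPolynomial (Fin 1) A →ₐ[A] AdicCompl A)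
      (MvPolynomial.X 0) f
    simp only [MvPolynomial.aeval_X] at this
    show (MvPolynomial.aeval fun _ : Fin 1 => yh) (Polynomial.aeval (MvPolynomial.X 0) f) = 0
    rw [← this, hroot]
  obtain ⟨y, hy1, hy2⟩ := h 1 1 (fun _ => F) (fun _ => yh) (fun i => hFy i) 1
  -- `y 0` is a root of `f` in `A`
  have hyroot : f.IsRoot (y 0) := by
    have := hy1 0
    have h3 := Polynomial.aeval_algHom_apply
      (MvPolynomial.aeval y : MvPolynomial (Fin 1) A →ₐ[A] A) (MvPolynomial.X 0) f
    simp only [MvPolynomial.aeval_X] at h3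
    rw [show F = Polynomial.aeval (MvPolynomial.X 0) f from rfl, ← h3] at this
    simpa [Polynomial.IsRoot, Polynomial.aeval_def, Polynomial.eval₂_eq_eval_map,
      Polynomial.map_id] using this
  refine ⟨y 0, hyroot, ?_⟩
  -- congruence: use the projection `evalₐ I 1 : Â → A ⧸ I ^ 1`
  have hcong := hy2 0
  let φ : AdicCompl A →ₐ[A] A ⧸ I ^ 1 := AdicCompletion.evalₐ I 1
  have hker : ∀ x ∈ Ideal.map (algebraMap A (AdicCompl A)) (I ^ 1), φ x = 0 := by
    intro x hx
    have hle : Ideal.map (algebraMap A (AdicCompl A)) (I ^ 1) ≤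
        RingHom.ker (φ : AdicCompl A →+* A ⧸ I ^ 1) := by
      rw [Ideal.map_le_iff_le_comap]
      intro z hz
      simp only [Ideal.mem_comap, RingHom.mem_ker, AlgHom.coe_ringHom_mk]
      show φ (algebraMap A (AdicCompl A) z) = 0
      rw [φ.commutes z, Ideal.Quotient.algebraMap_eq, Ideal.Quotient.eq_zero_iff_mem]
      exact hz
    exact hle hx
  have h0 : φ (algebraMap A (AdicCompl A) (y 0) - yh) = 0 := hker _ hcong
  have hφy : φ (algebraMap A (AdicCompl A) (y 0)) = Ideal.Quotient.mk (I ^ 1) (y 0) := by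
    rw [φ.commutes (y 0), Ideal.Quotient.algebraMap_eq]
  have hφyh : φ yh = Ideal.Quotient.mk (I ^ 1) (c 1) := AdicCompletion.evalₐ_mkₐ I 1 cs
  rw [map_sub, hφy, hφyh, sub_eq_zero] at h0
  have hy0c : y 0 - c 1 ∈ I := by
    have : y 0 - c 1 ∈ I ^ 1 := by
      rw [← Ideal.Quotient.eq_zero_iff_mem, map_sub, h0, sub_self]
    simpa using this
  have hca : c 1 - a₀ ∈ I := SModEq.sub_mem.mp (hc_mod 1)
  have : y 0 - a₀ = (y 0 - c 1) + (c 1 - a₀) := by ring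
  rw [this]
  exact I.add_mem hy0c hca
end

section
/- If a reduced Noetherian local ring (A, m) has the Artin approximation property, then its m-adic completion Â is also reduced. -/
open IsLocalRing

/-- If a reduced Noetherian local ring has the Artin approximation property, then its
`m`-adic completion is also reduced. -/
theorem isReduced_completion_of_hasArtinApprox (A : Type*) [CommRing A] [IsLocalRing A]
    [IsNoetherianRing A] [IsReduced A] (h : HasArtinApprox A) : IsReduced (AdicCompl A) := by
  refine ⟨fun x hx => ?_⟩
  obtain ⟨k, hk⟩ := hx
  have hx1 : x ^ (k + 1) = 0 := by rw [pow_succ, hk, zero_mul]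
  have key : ∀ c, x ∈ Ideal.map (algebraMap A (AdicCompl A)) (maximalIdeal A ^ c) := by
    intro c
    obtain ⟨y, hy, hyx⟩ := h 1 1 (fun _ => MvPolynomial.X 0 ^ (k + 1)) (fun _ => x)
      (fun i => by rw [map_pow, MvPolynomial.aeval_X]; exact hx1) c
    have hy0 : y 0 = 0 := IsNilpotent.eq_zero ⟨k + 1, by have := hy 0; rwa [map_pow, MvPolynomial.aeval_X] at this⟩
    have hmem := hyx 0
    rw [hy0, map_zero, zero_sub] at hmem
    simpa using (Ideal.map (algebraMap A (AdicCompl A)) (maximalIdeal A ^ c)).neg_mem hmem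
  refine IsHausdorff.haus (inferInstance : IsHausdorff (maximalIdeal A) (AdicCompl A)) x ?_
  intro n
  rw [SModEq.zero, Ideal.smul_top_eq_map]
  simpa [Ideal.map_pow] using key n
end

section
/- Let (A, m) be a Noetherian local ring with the Artin approximation property, and let M = A^n/(u₁,...,u_t) and N = A^n/(v₁,...,v_p) be finitely presented A-modules. If Â ⊗_A M ≅ Â ⊗_A N as Â-modules, then M ≅ N as A-modules. -/
open IsLocalRing

open TensorProduct

section Aux
variable {A : Type*} [CommRing A] (R : Type*) [CommRing R] [Algebra A R]
variable {n t : ℕ} (w : Fin t → (Fin n → A))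

def wmap : Fin t → (Fin n → R) := fun i => algebraMap A R ∘ w i

noncomputable def algPi : (Fin n → A) →ₗ[A] (Fin n → R) :=
  (Algebra.linearMap A R).compLeft (Fin n)

lemma single_alg (j : Fin n) :
    (Pi.single j 1 : Fin n → R) = algebraMap A R ∘ (Pi.single j 1 : Fin n → A) := by
  ext k
  simp [Pi.single_apply, apply_ite (algebraMap A R)]

noncomputable def fwdA :
    ((Fin n → A) ⧸ Submodule.span A (Set.range w)) →ₗ[A]
      ((Fin n → R) ⧸ Submodule.span R (Set.range (wmap R w))) :=
  Submodule.liftQ _ (((Submodule.span R (Set.range (wmap R w))).mkQ.restrictScalars A).comp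
    (algPi R)) (by
      rw [Submodule.span_le]
      rintro _ ⟨i, rfl⟩
      simp only [SetLike.mem_coe, LinearMap.mem_ker, LinearMap.comp_apply,
        LinearMap.restrictScalars_apply]
      have : algPi R (w i) = wmap R w i := rfl
      rw [this, Submodule.mkQ_apply, Submodule.Quotient.mk_eq_zero]
      exact Submodule.subset_span ⟨i, rfl⟩)

lemma fwdA_mk (x : Fin n → A) :
    fwdA R w (Submodule.Quotient.mk x) =
      Submodule.Quotient.mk (algebraMap A R ∘ x) := by
  rw [fwdA, Submodule.liftQ_apply]
  rfl

noncomputable def fwdMap :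
    (R ⊗[A] ((Fin n → A) ⧸ Submodule.span A (Set.range w))) →ₗ[R]
      ((Fin n → R) ⧸ Submodule.span R (Set.range (wmap R w))) :=
  LinearMap.liftBaseChange R (fwdA R w)

noncomputable def bwd0 :
    (Fin n → R) →ₗ[R] (R ⊗[A] ((Fin n → A) ⧸ Submodule.span A (Set.range w))) :=
  Fintype.linearCombination R
    (fun j => (1 : R) ⊗ₜ[A] (Submodule.span A (Set.range w)).mkQ (Pi.single j 1))

lemma pi_sum_single (x : Fin n → A) :
    ∑ j, x j • (Pi.single j 1 : Fin n → A) = x := by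
  ext k
  simp [Pi.single_apply]

lemma bwd0_alg (x : Fin n → A) :
    bwd0 R w (algebraMap A R ∘ x) =
      (1 : R) ⊗ₜ[A] (Submodule.span A (Set.range w)).mkQ x := by
  set π := (Submodule.span A (Set.range w)).mkQ with hπ
  rw [bwd0, Fintype.linearCombination_apply]
  have h1 : ∀ j : Fin n, (algebraMap A R ∘ x) j • ((1 : R) ⊗ₜ[A] π (Pi.single j 1))
      = (1 : R) ⊗ₜ[A] π (x j • (Pi.single j 1 : Fin n → A)) := by
    intro j
    rw [Function.comp_apply, algebraMap_smul, map_smul, tmul_smul]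
  rw [Finset.sum_congr rfl fun j _ => h1 j, ← tmul_sum, ← map_sum π, pi_sum_single]

lemma bwd0_wmap (i : Fin t) : bwd0 R w (wmap R w i) = 0 := by
  have := bwd0_alg R w (w i)
  rw [show (algebraMap A R ∘ w i) = wmap R w i from rfl] at this
  rw [this, Submodule.mkQ_apply, (Submodule.Quotient.mk_eq_zero _).2
    (Submodule.subset_span (Set.mem_range_self i)), tmul_zero]

noncomputable def bwdMap :
    ((Fin n → R) ⧸ Submodule.span R (Set.range (wmap R w))) →ₗ[R]
      (R ⊗[A] ((Fin n → A) ⧸ Submodule.span A (Set.range w))) :=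
  Submodule.liftQ _ (bwd0 R w) (by
    rw [Submodule.span_le]
    rintro _ ⟨i, rfl⟩
    exact bwd0_wmap R w i)

noncomputable def baseChangeEquiv :
    (R ⊗[A] ((Fin n → A) ⧸ Submodule.span A (Set.range w))) ≃ₗ[R]
      ((Fin n → R) ⧸ Submodule.span R (Set.range (wmap R w))) :=
  LinearEquiv.ofLinear (fwdMap R w) (bwdMap R w)
    (by
      apply Submodule.linearMap_qext
      apply Module.Basis.ext (Pi.basisFun R (Fin n))
      intro j
      simp only [Pi.basisFun_apply, LinearMap.comp_apply, Submodule.mkQ_apply,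
        LinearMap.id_comp]
      rw [single_alg (A := A) R j, bwdMap, Submodule.liftQ_apply, bwd0_alg, fwdMap,
        LinearMap.liftBaseChange_tmul, one_smul, Submodule.mkQ_apply, fwdA_mk]
    )
    (by
      apply LinearMap.ext
      intro z
      induction z using TensorProduct.induction_on with
      | zero => simp
      | tmul r m =>
        obtain ⟨x, rfl⟩ := (Submodule.span A (Set.range w)).mkQ_surjective m
        simp only [LinearMap.comp_apply, LinearMap.id_apply, Submodule.mkQ_apply]
        rw [fwdMap, LinearMap.liftBaseChange_tmul, fwdA_mk, map_smul, bwdMap,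
          Submodule.liftQ_apply, bwd0_alg, smul_tmul', smul_eq_mul, mul_one,
          Submodule.mkQ_apply]
      | add a b ha hb =>
        simp only [LinearMap.comp_apply, LinearMap.id_apply] at ha hb
        simp only [map_add, ha, hb, LinearMap.comp_apply, LinearMap.id_apply]
    )

end Aux

section Main
variable {A : Type*} [CommRing A] {n t p : ℕ}

lemma iso_of_sol (u : Fin t → (Fin n → A)) (v : Fin p → (Fin n → A))
    (φ ψ : Matrix (Fin n) (Fin n) A)
    (a : Fin t → Fin p → A) (b : Fin p → Fin t → A)
    (d : Fin n → Fin t → A) (e : Fin n → Fin p → A)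
    (h1 : ∀ i k, ∑ j, φ k j * u i j = ∑ j, a i j * v j k)
    (h2 : ∀ i k, ∑ j, ψ k j * v i j = ∑ j, b i j * u j k)
    (h3 : ∀ l k, (∑ j, ψ k j * φ j l) - (if k = l then 1 else 0) = ∑ i, d l i * u i k)
    (h4 : ∀ l k, (∑ j, φ k j * ψ j l) - (if k = l then 1 else 0) = ∑ i, e l i * v i k) :
    Nonempty (((Fin n → A) ⧸ Submodule.span A (Set.range u))
      ≃ₗ[A] ((Fin n → A) ⧸ Submodule.span A (Set.range v))) := by
  have mulVec_apply : ∀ (M : Matrix (Fin n) (Fin n) A) (x : Fin n → A) (k : Fin n),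
      M.mulVecLin x k = ∑ j, M k j * x j := by
    intro M x k
    simp [Matrix.mulVecLin_apply, Matrix.mulVec, dotProduct]
  have hφ : Submodule.span A (Set.range u) ≤
      (Submodule.span A (Set.range v)).comap φ.mulVecLin := by
    rw [Submodule.span_le]
    rintro _ ⟨i, rfl⟩
    simp only [SetLike.mem_coe, Submodule.mem_comap]
    have : φ.mulVecLin (u i) = ∑ j, a i j • v j := by
      ext k
      rw [mulVec_apply, h1 i k]
      simp [Finset.sum_apply]
    rw [this]
    exact Submodule.sum_mem _ fun j _ =>
      Submodule.smul_mem _ _ (Submodule.subset_span (Set.mem_range_self j))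
  have hψ : Submodule.span A (Set.range v) ≤
      (Submodule.span A (Set.range u)).comap ψ.mulVecLin := by
    rw [Submodule.span_le]
    rintro _ ⟨i, rfl⟩
    simp only [SetLike.mem_coe, Submodule.mem_comap]
    have : ψ.mulVecLin (v i) = ∑ j, b i j • u j := by
      ext k
      rw [mulVec_apply, h2 i k]
      simp [Finset.sum_apply]
    rw [this]
    exact Submodule.sum_mem _ fun j _ =>
      Submodule.smul_mem _ _ (Submodule.subset_span (Set.mem_range_self j))
  set F := Submodule.mapQ _ _ φ.mulVecLin hφ
  set G := Submodule.mapQ _ _ ψ.mulVecLin hψ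
  have key : ∀ (q : ℕ) (M N : Matrix (Fin n) (Fin n) A) (c : Fin n → Fin q → A)
      (w : Fin q → (Fin n → A)),
      (∀ l k, (∑ j, M k j * N j l) - (if k = l then 1 else 0) = ∑ i, c l i * w i k) →
      ∀ l, M.mulVecLin (N.mulVecLin (Pi.single l 1)) - Pi.single l 1 ∈
        Submodule.span A (Set.range w) := by
    intro q M N c w hc l
    have : M.mulVecLin (N.mulVecLin (Pi.single l 1)) - Pi.single l 1 = ∑ i, c l i • w i := by
      ext k
      have hN : N.mulVecLin (Pi.single l 1) = fun j => N j l := by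
        rw [Matrix.mulVecLin_apply, Matrix.mulVec_single]
        simp
        rfl
      rw [Pi.sub_apply, mulVec_apply, hN]
      rw [Pi.single_apply]
      rw [hc l k]
      simp [Finset.sum_apply]
    rw [this]
    exact Submodule.sum_mem _ fun i _ =>
      Submodule.smul_mem _ _ (Submodule.subset_span (Set.mem_range_self i))
  refine ⟨LinearEquiv.ofLinear F G ?_ ?_⟩
  · apply Submodule.linearMap_qext
    apply Module.Basis.ext (Pi.basisFun A (Fin n))
    intro l
    simp only [Pi.basisFun_apply, LinearMap.comp_apply, Submodule.mkQ_apply,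
      LinearMap.id_comp, LinearMap.id_apply, Submodule.mapQ_apply, F, G]
    rw [Submodule.Quotient.eq]
    exact key p φ ψ e v (fun l k => h4 l k) l
  · apply Submodule.linearMap_qext
    apply Module.Basis.ext (Pi.basisFun A (Fin n))
    intro l
    simp only [Pi.basisFun_apply, LinearMap.comp_apply, Submodule.mkQ_apply,
      LinearMap.id_comp, LinearMap.id_apply, Submodule.mapQ_apply, F, G]
    rw [Submodule.Quotient.eq]
    exact key t ψ φ d u (fun l k => h3 l k) l

end Main

section Sol
variable {A : Type*} [CommRing A] {n t p : ℕ}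

lemma sol_of_iso (R : Type*) [CommRing R] [Algebra A R]
    (u : Fin t → (Fin n → A)) (v : Fin p → (Fin n → A))
    (G : (R ⊗[A] ((Fin n → A) ⧸ Submodule.span A (Set.range u)))
      ≃ₗ[R] (R ⊗[A] ((Fin n → A) ⧸ Submodule.span A (Set.range v)))) :
    ∃ (φ ψ : Matrix (Fin n) (Fin n) R)
      (a : Fin t → Fin p → R) (b : Fin p → Fin t → R)
      (d : Fin n → Fin t → R) (e : Fin n → Fin p → R),
      (∀ i k, ∑ j, φ k j * algebraMap A R (u i j) = ∑ j, a i j * algebraMap A R (v j k)) ∧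
      (∀ i k, ∑ j, ψ k j * algebraMap A R (v i j) = ∑ j, b i j * algebraMap A R (u j k)) ∧
      (∀ l k, (∑ j, ψ k j * φ j l) - (if k = l then 1 else 0)
        = ∑ i, d l i * algebraMap A R (u i k)) ∧
      (∀ l k, (∑ j, φ k j * ψ j l) - (if k = l then 1 else 0)
        = ∑ i, e l i * algebraMap A R (v i k)) := by
  classical
  set Su := Submodule.span R (Set.range (wmap R u)) with hSu
  set Sv := Submodule.span R (Set.range (wmap R v)) with hSv
  set Ghat : ((Fin n → R) ⧸ Su) ≃ₗ[R] ((Fin n → R) ⧸ Sv) :=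
    ((baseChangeEquiv R u).symm.trans G).trans (baseChangeEquiv R v) with hGhat
  obtain ⟨Φ, hΦ⟩ := Module.projective_lifting_property Sv.mkQ
    (Ghat.toLinearMap ∘ₗ Su.mkQ) Sv.mkQ_surjective
  obtain ⟨Ψ, hΨ⟩ := Module.projective_lifting_property Su.mkQ
    (Ghat.symm.toLinearMap ∘ₗ Sv.mkQ) Su.mkQ_surjective
  -- the matrices
  set φ : Matrix (Fin n) (Fin n) R := fun k j => Φ (Pi.single j 1) k with hφ
  set ψ : Matrix (Fin n) (Fin n) R := fun k j => Ψ (Pi.single j 1) k with hψ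
  have happ : ∀ (T : (Fin n → R) →ₗ[R] (Fin n → R)) (x : Fin n → R) (k : Fin n),
      T x k = ∑ j, T (Pi.single j 1) k * x j := by
    intro T x k
    conv_lhs => rw [show x = ∑ j, x j • (Pi.single j 1 : Fin n → R) by
      ext m; simp [Pi.single_apply]]
    rw [map_sum]
    simp [Finset.sum_apply, mul_comm]
  -- membership facts
  have hmkU : ∀ i, Su.mkQ (wmap R u i) = 0 := fun i => by
    rw [Submodule.mkQ_apply, Submodule.Quotient.mk_eq_zero]
    exact Submodule.subset_span (Set.mem_range_self i)
  have hmkV : ∀ i, Sv.mkQ (wmap R v i) = 0 := fun i => by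
    rw [Submodule.mkQ_apply, Submodule.Quotient.mk_eq_zero]
    exact Submodule.subset_span (Set.mem_range_self i)
  have memU : ∀ x : Fin n → R, Su.mkQ x = 0 → x ∈ Su := by
    intro x hx
    rwa [Submodule.mkQ_apply, Submodule.Quotient.mk_eq_zero] at hx
  have memV : ∀ x : Fin n → R, Sv.mkQ x = 0 → x ∈ Sv := by
    intro x hx
    rwa [Submodule.mkQ_apply, Submodule.Quotient.mk_eq_zero] at hx
  have hau : ∀ i, ∃ c : Fin p → R, ∑ j, c j • wmap R v j = Φ (wmap R u i) := by
    intro i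
    rw [← Submodule.mem_span_range_iff_exists_fun, ← hSv]
    refine memV _ ?_
    rw [← LinearMap.comp_apply, hΦ, LinearMap.comp_apply, hmkU, map_zero]
  have hbv : ∀ i, ∃ c : Fin t → R, ∑ j, c j • wmap R u j = Ψ (wmap R v i) := by
    intro i
    rw [← Submodule.mem_span_range_iff_exists_fun, ← hSu]
    refine memU _ ?_
    rw [← LinearMap.comp_apply, hΨ, LinearMap.comp_apply, hmkV, map_zero]
  have hdu : ∀ l, ∃ c : Fin t → R,
      ∑ i, c i • wmap R u i = Ψ (Φ (Pi.single l 1)) - Pi.single l 1 := by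
    intro l
    rw [← Submodule.mem_span_range_iff_exists_fun, ← hSu]
    refine memU _ ?_
    rw [map_sub, ← LinearMap.comp_apply, hΨ, LinearMap.comp_apply,
      ← LinearMap.comp_apply Sv.mkQ, hΦ, LinearMap.comp_apply,
      LinearEquiv.coe_coe, LinearEquiv.coe_coe, LinearEquiv.symm_apply_apply, sub_self]
  have hev : ∀ l, ∃ c : Fin p → R,
      ∑ i, c i • wmap R v i = Φ (Ψ (Pi.single l 1)) - Pi.single l 1 := by
    intro l
    rw [← Submodule.mem_span_range_iff_exists_fun, ← hSv]
    refine memV _ ?_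
    rw [map_sub, ← LinearMap.comp_apply, hΦ, LinearMap.comp_apply,
      ← LinearMap.comp_apply Su.mkQ, hΨ, LinearMap.comp_apply,
      LinearEquiv.coe_coe, LinearEquiv.coe_coe, LinearEquiv.apply_symm_apply, sub_self]
  choose a ha using hau
  choose b hb using hbv
  choose d hd using hdu
  choose e he using hev
  refine ⟨φ, ψ, a, b, d, e, ?_, ?_, ?_, ?_⟩
  · intro i k
    have h1 := congrFun (ha i) k
    simp only [Finset.sum_apply, Pi.smul_apply, smul_eq_mul] at h1
    rw [happ Φ (wmap R u i) k] at h1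
    simp only [wmap, Function.comp_apply] at h1
    simp only [hφ]
    exact h1.symm
  · intro i k
    have h1 := congrFun (hb i) k
    simp only [Finset.sum_apply, Pi.smul_apply, smul_eq_mul] at h1
    rw [happ Ψ (wmap R v i) k] at h1
    simp only [wmap, Function.comp_apply] at h1
    simp only [hψ]
    exact h1.symm
  · intro l k
    have h1 := congrFun (hd l) k
    simp only [Finset.sum_apply, Pi.smul_apply, smul_eq_mul, Pi.sub_apply] at h1
    rw [happ Ψ (Φ (Pi.single l 1)) k] at h1
    simp only [wmap, Function.comp_apply, Pi.single_apply] at h1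
    have h2 : ∀ j, Φ (Pi.single l 1) j = φ j l := fun j => rfl
    simp only [h2] at h1
    simp only [hφ, hψ]
    rw [← h1]
  · intro l k
    have h1 := congrFun (he l) k
    simp only [Finset.sum_apply, Pi.smul_apply, smul_eq_mul, Pi.sub_apply] at h1
    rw [happ Φ (Ψ (Pi.single l 1)) k] at h1
    simp only [wmap, Function.comp_apply, Pi.single_apply] at h1
    have h2 : ∀ j, Ψ (Pi.single l 1) j = ψ j l := fun j => rfl
    simp only [h2] at h1
    simp only [hφ, hψ]
    rw [← h1]

end Sol


lemma approx_fintype {A : Type*} [CommRing A] [IsLocalRing A] (hA : HasArtinApprox A)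
    {ι κ : Type} [Fintype ι] [Fintype κ]
    (f : κ → MvPolynomial ι A) (yh : ι → AdicCompl A)
    (hy : ∀ i, MvPolynomial.aeval yh (f i) = 0) :
    ∃ y : ι → A, ∀ i, MvPolynomial.aeval y (f i) = 0 := by
  let e := Fintype.equivFin ι
  let e' := Fintype.equivFin κ
  obtain ⟨y, hy0, -⟩ := hA (Fintype.card ι) (Fintype.card κ)
    (fun i => MvPolynomial.rename e (f (e'.symm i))) (yh ∘ e.symm)
    (fun i => by
      rw [MvPolynomial.aeval_rename]
      have : (yh ∘ ⇑e.symm) ∘ ⇑e = yh := by ext j; simp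
      rw [this]
      exact hy _) 0
  refine ⟨y ∘ e, fun i => ?_⟩
  have := hy0 (e' i)
  rwa [MvPolynomial.aeval_rename, Equiv.symm_apply_apply] at this


open TensorProduct in
/-- If `(A,m)` has the Artin approximation property and `M = A^n/(u₁,…,u_t)`,
`N = A^n/(v₁,…,v_p)` are finitely presented `A`-modules with `Â ⊗ M ≅ Â ⊗ N` as
`Â`-modules, then `M ≅ N` as `A`-modules. -/
theorem linearEquiv_of_completion_linearEquiv (A : Type*) [CommRing A] [IsLocalRing A]
    [IsNoetherianRing A] (hA : HasArtinApprox A) (n t p : ℕ)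
    (u : Fin t → (Fin n → A)) (v : Fin p → (Fin n → A))
    (h : Nonempty ((AdicCompl A ⊗[A] ((Fin n → A) ⧸ Submodule.span A (Set.range u)))
      ≃ₗ[AdicCompl A]
      (AdicCompl A ⊗[A] ((Fin n → A) ⧸ Submodule.span A (Set.range v))))) :
    Nonempty (((Fin n → A) ⧸ Submodule.span A (Set.range u))
      ≃ₗ[A] ((Fin n → A) ⧸ Submodule.span A (Set.range v))) := by
  open MvPolynomial in
  classical
  obtain ⟨G⟩ := h
  set R := AdicCompletion (maximalIdeal A) A
  obtain ⟨φ, ψ, a, b, d, e, H1, H2, H3, H4⟩ := sol_of_iso R u v G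
  -- index types
  set ι : Type := ((Fin n × Fin n) ⊕ (Fin n × Fin n)) ⊕
    (((Fin t × Fin p) ⊕ (Fin p × Fin t)) ⊕ ((Fin n × Fin t) ⊕ (Fin n × Fin p))) with hι
  set κ : Type := (Fin t × Fin n) ⊕ ((Fin p × Fin n) ⊕ ((Fin n × Fin n) ⊕ (Fin n × Fin n)))
    with hκ
  -- the polynomial system
  set f : κ → MvPolynomial ι A := Sum.elim
    (fun ik => (∑ j, X (.inl (.inl (ik.2, j))) * C (u ik.1 j)) -
      ∑ j, X (.inr (.inl (.inl (ik.1, j)))) * C (v j ik.2))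
    (Sum.elim
      (fun ik => (∑ j, X (.inl (.inr (ik.2, j))) * C (v ik.1 j)) -
        ∑ j, X (.inr (.inl (.inr (ik.1, j)))) * C (u j ik.2))
      (Sum.elim
        (fun lk => (∑ j, X (.inl (.inr (lk.2, j))) * X (.inl (.inl (j, lk.1)))) -
          C (if lk.2 = lk.1 then 1 else 0) -
          ∑ i, X (.inr (.inr (.inl (lk.1, i)))) * C (u i lk.2))
        (fun lk => (∑ j, X (.inl (.inl (lk.2, j))) * X (.inl (.inr (j, lk.1)))) -
          C (if lk.2 = lk.1 then 1 else 0) -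
          ∑ i, X (.inr (.inr (.inr (lk.1, i)))) * C (v i lk.2)))) with hf
  -- the solution over the completion
  set yh : ι → R := Sum.elim
    (Sum.elim (fun kj => φ kj.1 kj.2) (fun kj => ψ kj.1 kj.2))
    (Sum.elim (Sum.elim (fun ij => a ij.1 ij.2) (fun ij => b ij.1 ij.2))
      (Sum.elim (fun li => d li.1 li.2) (fun li => e li.1 li.2))) with hyh
  have hsol : ∀ i, MvPolynomial.aeval yh (f i) = 0 := by
    rintro (⟨i, k⟩ | ⟨i, k⟩ | ⟨l, k⟩ | ⟨l, k⟩) <;>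
      simp only [hf, Sum.elim_inl, Sum.elim_inr, map_sub, map_sum, map_mul, aeval_X, aeval_C,
        hyh, sub_eq_zero, apply_ite (algebraMap A R), map_one, map_zero]
    · exact H1 i k
    · exact H2 i k
    · exact H3 l k
    · exact H4 l k
  obtain ⟨y, hy⟩ := approx_fintype hA f yh hsol
  have hy' : ∀ i, MvPolynomial.aeval y (f i) = 0 := hy
  refine iso_of_sol u v (fun k j => y (.inl (.inl (k, j)))) (fun k j => y (.inl (.inr (k, j))))
    (fun i j => y (.inr (.inl (.inl (i, j))))) (fun i j => y (.inr (.inl (.inr (i, j)))))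
    (fun l i => y (.inr (.inr (.inl (l, i))))) (fun l i => y (.inr (.inr (.inr (l, i)))))
    ?_ ?_ ?_ ?_
  · intro i k
    have := hy' (.inl (i, k))
    simpa only [hf, Sum.elim_inl, Sum.elim_inr, map_sub, map_sum, map_mul, aeval_X, aeval_C,
      Algebra.algebraMap_self_apply, sub_eq_zero] using this
  · intro i k
    have := hy' (.inr (.inl (i, k)))
    simpa only [hf, Sum.elim_inl, Sum.elim_inr, map_sub, map_sum, map_mul, aeval_X, aeval_C,
      Algebra.algebraMap_self_apply, sub_eq_zero] using this
  · intro l k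
    have := hy' (.inr (.inr (.inl (l, k))))
    simp only [hf, Sum.elim_inl, Sum.elim_inr, map_sub, map_sum, map_mul, aeval_X, aeval_C,
      Algebra.algebraMap_self_apply] at this
    rw [sub_eq_zero] at this
    exact this
  · intro l k
    have := hy' (.inr (.inr (.inr (l, k))))
    simp only [hf, Sum.elim_inl, Sum.elim_inr, map_sub, map_sum, map_mul, aeval_X, aeval_C,
      Algebra.algebraMap_self_apply] at this
    rw [sub_eq_zero] at this
    exact this
end

section
/- Let A be a ring, (a₁, a₂) a weak regular sequence in A, and A' a flat A-algebra. Then every solution (y₁, y₂) ∈ A'² of a₁Y₁ + a₂Y₂ = 0 is of the form (−z a₂, z a₁) for some z ∈ A'. Consequently, any A-algebra morphism B = A[Y₁,Y₂]/(a₁Y₁ + a₂Y₂) → A' factors through the polynomial A-algebra A[Z] via Y₁ ↦ −a₂Z, Y₂ ↦ a₁Z. -/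
open TensorProduct LinearMap

theorem key (A : Type*) [CommRing A] (a₁ a₂ : A)
    (h1 : a₁ ∈ nonZeroDivisors A)
    (h2 : Ideal.Quotient.mk (Ideal.span {a₁}) a₂ ∈ nonZeroDivisors (A ⧸ Ideal.span {a₁}))
    (A' : Type*) [CommRing A'] [Algebra A A'] [Module.Flat A A'] :
    ∀ y₁ y₂ : A', algebraMap A A' a₁ * y₁ + algebraMap A A' a₂ * y₂ = 0 →
      ∃ z : A', y₁ = -(z * algebraMap A A' a₂) ∧ y₂ = z * algebraMap A A' a₁ := by
  intro y₁ y₂ hy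
  -- the Koszul complex A → A × A → A
  set f : A →ₗ[A] A × A :=
    { toFun := fun z => (-(a₂ * z), a₁ * z)
      map_add' := by intro x y; refine Prod.ext ?_ ?_ <;> simp <;> ring
      map_smul' := by intro c x; refine Prod.ext ?_ ?_ <;> simp <;> ring } with hf
  set g : A × A →ₗ[A] A :=
    { toFun := fun p => a₁ * p.1 + a₂ * p.2
      map_add' := by intro x y; simp; ring
      map_smul' := by intro c x; simp; ring } with hg
  have hexact : Function.Exact f g := by
    rw [Function.Exact]
    intro p
    constructor
    · intro hp
      simp only [hg, hf, LinearMap.coe_mk, AddHom.coe_mk] at hp ⊢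
      -- a₂ * p.2 ∈ (a₁)
      have hmem : Ideal.Quotient.mk (Ideal.span {a₁}) (p.2) = 0 := by
        have : Ideal.Quotient.mk (Ideal.span {a₁}) p.2 * Ideal.Quotient.mk _ a₂ = 0 := by
          rw [← map_mul, ← map_zero (Ideal.Quotient.mk (Ideal.span {a₁}))]
          apply Ideal.Quotient.eq.mpr
          rw [sub_zero]
          refine Ideal.mem_span_singleton.mpr ⟨-p.1, ?_⟩
          linear_combination hp
        exact (mem_nonZeroDivisors_iff.mp h2).2 _ this
      obtain ⟨z, hz⟩ := Ideal.mem_span_singleton.mp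
        (Ideal.Quotient.eq_zero_iff_mem.mp hmem)
      refine ⟨z, ?_⟩
      have hp1 : a₁ * (p.1 + a₂ * z) = 0 := by
        rw [hz] at hp; ring_nf; ring_nf at hp; linear_combination hp
      have := (mem_nonZeroDivisors_iff.mp h1).2 _ (show (p.1 + a₂ * z) * a₁ = 0 by linear_combination hp1)
      have hp1' : p.1 = -(a₂ * z) := by linear_combination this
      exact Prod.ext (by rw [hp1']) (by rw [hz])
    · rintro ⟨z, rfl⟩
      simp only [hg, hf, LinearMap.coe_mk, AddHom.coe_mk]
      ring
  have hexact' := Module.Flat.lTensor_exact A' hexact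
  set e : A' ⊗[A] (A × A) ≃ₗ[A] A' × A' :=
    (TensorProduct.prodRight A A A' A A).trans
      (LinearEquiv.prodCongr (TensorProduct.rid A A') (TensorProduct.rid A A')) with he
  set t : A' ⊗[A] (A × A) := y₁ ⊗ₜ (1, 0) + y₂ ⊗ₜ (0, 1) with ht
  have hgt : g.lTensor A' t = 0 := by
    have : (TensorProduct.rid A A') (g.lTensor A' t) = 0 := by
      simp only [ht, map_add, lTensor_tmul, hg, LinearMap.coe_mk, AddHom.coe_mk,
        TensorProduct.rid_tmul]
      simp only [mul_one, mul_zero, add_zero, zero_add, Algebra.smul_def]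
      linear_combination hy
    exact (_root_.map_eq_zero_iff _ (TensorProduct.rid A A').injective).mp this
  obtain ⟨s, hs⟩ := (hexact' t).mp hgt
  set z : A' := TensorProduct.rid A A' s with hz
  have hs' : s = z ⊗ₜ 1 := by
    rw [hz, ← TensorProduct.rid_symm_apply, LinearEquiv.symm_apply_apply]
  refine ⟨z, ?_⟩
  have : e (f.lTensor A' s) = e t := by rw [hs]
  rw [hs'] at this
  simp only [lTensor_tmul, hf, LinearMap.coe_mk, AddHom.coe_mk, mul_one, ht, map_add, he,
    LinearEquiv.trans_apply, TensorProduct.prodRight_tmul, LinearEquiv.prodCongr_apply,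
    TensorProduct.rid_tmul, Prod.mk_add_mk, one_smul, zero_smul, add_zero, zero_add,
    Prod.ext_iff] at this
  obtain ⟨h1', h2'⟩ := this
  constructor
  · rw [← h1', Algebra.smul_def]; simp [mul_comm]
  · rw [← h2', Algebra.smul_def, mul_comm]

set_option maxHeartbeats 1000000 in
set_option synthInstance.maxHeartbeats 400000 in
set_option maxRecDepth 8000 in
/-- Let `(a₁, a₂)` be a weak regular sequence in `A` and `A'` a flat `A`-algebra. Then every
solution of `a₁Y₁ + a₂Y₂ = 0` in `A'` has the form `(-z a₂, z a₁)`, and any `A`-algebra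
morphism `B = A[Y₁,Y₂]/(a₁Y₁ + a₂Y₂) → A'` factors through the polynomial algebra `A[Z]`
via `Y₁ ↦ -a₂ Z`, `Y₂ ↦ a₁ Z`. -/
theorem flat_solutions_and_factorization (A : Type*) [CommRing A] (a₁ a₂ : A)
    (h1 : a₁ ∈ nonZeroDivisors A)
    (h2 : Ideal.Quotient.mk (Ideal.span {a₁}) a₂ ∈ nonZeroDivisors (A ⧸ Ideal.span {a₁}))
    (A' : Type*) [CommRing A'] [Algebra A A'] [Module.Flat A A'] :
    (∀ y₁ y₂ : A', algebraMap A A' a₁ * y₁ + algebraMap A A' a₂ * y₂ = 0 →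
      ∃ z : A', y₁ = -(z * algebraMap A A' a₂) ∧ y₂ = z * algebraMap A A' a₁) ∧
    ∀ v : (MvPolynomial (Fin 2) A ⧸ Ideal.span {MvPolynomial.C a₁ * MvPolynomial.X 0 +
        MvPolynomial.C a₂ * MvPolynomial.X 1}) →ₐ[A] A',
      ∃ w : Polynomial A →ₐ[A] A',
        v (Ideal.Quotient.mk _ (MvPolynomial.X 0)) = w (-(Polynomial.C a₂) * Polynomial.X) ∧
        v (Ideal.Quotient.mk _ (MvPolynomial.X 1)) = w (Polynomial.C a₁ * Polynomial.X) := by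
  have hkey := key A a₁ a₂ h1 h2 A'
  refine ⟨hkey, ?_⟩
  intro v
  have h0 : Ideal.Quotient.mk (Ideal.span {MvPolynomial.C a₁ * MvPolynomial.X 0 +
      MvPolynomial.C a₂ * MvPolynomial.X (1 : Fin 2)}) (MvPolynomial.C a₁ * MvPolynomial.X 0 +
      MvPolynomial.C a₂ * MvPolynomial.X 1) = 0 :=
    Ideal.Quotient.eq_zero_iff_mem.mpr (Ideal.subset_span rfl)
  have hrel : algebraMap A A' a₁ * v (Ideal.Quotient.mk _ (MvPolynomial.X 0)) +
      algebraMap A A' a₂ * v (Ideal.Quotient.mk _ (MvPolynomial.X 1)) = 0 := by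
    have h := congrArg v h0
    rw [map_add, map_mul, map_mul, map_add, map_mul, map_mul] at h
    rw [show (Ideal.Quotient.mk (Ideal.span {MvPolynomial.C a₁ * MvPolynomial.X 0 +
      MvPolynomial.C a₂ * MvPolynomial.X (1 : Fin 2)})) (MvPolynomial.C a₁) =
      algebraMap A _ a₁ from rfl,
      show (Ideal.Quotient.mk (Ideal.span {MvPolynomial.C a₁ * MvPolynomial.X 0 +
      MvPolynomial.C a₂ * MvPolynomial.X (1 : Fin 2)})) (MvPolynomial.C a₂) =
      algebraMap A _ a₂ from rfl,
      v.commutes, v.commutes, map_zero] at h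
    exact h
  obtain ⟨z, hz1, hz2⟩ := hkey _ _ hrel
  refine ⟨Polynomial.aeval z, ?_, ?_⟩
  · rw [hz1, map_mul, map_neg, Polynomial.aeval_C, Polynomial.aeval_X]; ring
  · rw [hz2, map_mul, Polynomial.aeval_C, Polynomial.aeval_X]; ring
end

section
/- Let A be a ring, f_i = Σ_j a_{ij}Y_j (i = 1,...,r) linear homogeneous forms in A[Y₁,...,Y_n], b ∈ A^r, c ∈ A^n a solution of f = b, and y⁽¹⁾,...,y⁽ᵖ⁾ a generating system of solutions of f = 0 in A. If A' is a flat A-algebra and B = A[Y₁,...,Y_n]/(f₁ − b₁,...,f_r − b_r), then every A-algebra morphism B → A' factors through the polynomial A-algebra A[Z₁,...,Z_p], via Y ↦ c + Σ_k Z_k y⁽ᵏ⁾. -/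
open TensorProduct in
/-- Auxiliary: `piScalarRight` intertwines `lTensor` of `mulVecLin` with the
componentwise matrix action. -/
lemma lTensor_mulVecLin_apply {A : Type*} [CommRing A] {A' : Type*} [CommRing A']
    [Algebra A A'] {m n : ℕ} (M : Matrix (Fin m) (Fin n) A)
    (t : A' ⊗[A] (Fin n → A)) (i : Fin m) :
    piScalarRight A A' A' (Fin m) (LinearMap.lTensor A' M.mulVecLin t) i
      = ∑ j, M i j • piScalarRight A A' A' (Fin n) t j := by
  induction t with
  | zero => simp
  | tmul x f =>
      simp only [LinearMap.lTensor_tmul, Matrix.mulVecLin_apply,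
        TensorProduct.piScalarRight_apply, TensorProduct.piScalarRightHom_tmul]
      rw [show M.mulVec f i = ∑ j, M i j * f j from rfl, Finset.sum_smul]
      exact Finset.sum_congr rfl fun j _ => (smul_smul _ _ _).symm
  | add s t hs ht =>
      simp only [map_add, Pi.add_apply, hs, ht, smul_add, Finset.sum_add_distrib]

/-- Let `f_i = Σ_j a_{ij} Y_j` be linear homogeneous forms, `c` a solution of `f = b`, and
`y⁽¹⁾,…,y⁽ᵖ⁾` a generating system of solutions of `f = 0` in `A`. If `A'` is flat over `A`
and `B = A[Y]/(f - b)`, then every `A`-algebra morphism `B → A'` factors through the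
polynomial algebra `A[Z₁,…,Z_p]` via `Y ↦ c + Σ_k Z_k y⁽ᵏ⁾`. -/
theorem flat_factorization_inhomogeneous (A : Type*) [CommRing A]
    (A' : Type*) [CommRing A'] [Algebra A A'] [Module.Flat A A']
    (r n p : ℕ) (a : Matrix (Fin r) (Fin n) A) (b : Fin r → A)
    (c : Fin n → A) (hc : ∀ i, ∑ j, a i j * c j = b i)
    (y : Fin p → (Fin n → A))
    (hgen : Submodule.span A (Set.range y) = LinearMap.ker a.mulVecLin)
    (v : (MvPolynomial (Fin n) A ⧸ Ideal.span (Set.range fun i =>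
      (∑ j, MvPolynomial.C (a i j) * MvPolynomial.X j) - MvPolynomial.C (b i))) →ₐ[A] A') :
    ∃ w : MvPolynomial (Fin p) A →ₐ[A] A',
      ∀ j, v (Ideal.Quotient.mk _ (MvPolynomial.X j)) =
        w (MvPolynomial.C (c j) + ∑ k, MvPolynomial.C (y k j) * MvPolynomial.X k) := by
  classical
  set x : Fin n → A' := fun j => v (Ideal.Quotient.mk _ (MvPolynomial.X j)) with hx
  have key : ∀ q : A, v (Ideal.Quotient.mk _ (MvPolynomial.C q)) = algebraMap A A' q :=
    fun q => v.commutes q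
  -- the relations hold for x
  have hrel : ∀ i, ∑ j, a i j • x j = algebraMap A A' (b i) := by
    intro i
    have hmem : ((∑ j, MvPolynomial.C (a i j) * MvPolynomial.X j)
        - MvPolynomial.C (b i) : MvPolynomial (Fin n) A) ∈
        Ideal.span (Set.range fun i => (∑ j, MvPolynomial.C (a i j) * MvPolynomial.X j)
          - MvPolynomial.C (b i)) :=
      Ideal.subset_span ⟨i, rfl⟩
    have h0 : v (Ideal.Quotient.mk _ ((∑ j, MvPolynomial.C (a i j) * MvPolynomial.X j)
        - MvPolynomial.C (b i))) = 0 := by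
      rw [Ideal.Quotient.eq_zero_iff_mem.mpr hmem, map_zero]
    simp only [map_sub, map_sum, map_mul, sub_eq_zero] at h0
    calc ∑ j, a i j • x j
        = ∑ j, v (Ideal.Quotient.mk _ (MvPolynomial.C (a i j)))
            * v (Ideal.Quotient.mk _ (MvPolynomial.X j)) :=
          Finset.sum_congr rfl fun j _ => by rw [Algebra.smul_def, key]
      _ = v (Ideal.Quotient.mk _ (MvPolynomial.C (b i))) := h0
      _ = algebraMap A A' (b i) := key _
  -- the difference x - c is a solution of the homogeneous system over A'
  set x' : Fin n → A' := fun j => x j - algebraMap A A' (c j) with hx'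
  have hrel' : ∀ i, ∑ j, a i j • x' j = 0 := by
    intro i
    have hcs : ∑ j, a i j • (algebraMap A A' (c j)) = algebraMap A A' (b i) := by
      simp_rw [Algebra.smul_def, ← map_mul, ← map_sum, hc i]
    simp only [hx', smul_sub, Finset.sum_sub_distrib, hrel i, hcs, sub_self]
  -- the homogeneous-solution matrix
  set g : Matrix (Fin n) (Fin p) A := Matrix.of fun j k => y k j with hg
  have hexact : Function.Exact g.mulVecLin a.mulVecLin := by
    rw [LinearMap.exact_iff, Matrix.range_mulVecLin, ← hgen]
    rfl
  have hexact' := Module.Flat.lTensor_exact A' hexact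
  -- transfer x' across the tensor identification
  set e := TensorProduct.piScalarRight A A' A' (Fin n) with he
  have h0' : (TensorProduct.piScalarRight A A' A' (Fin r))
      (LinearMap.lTensor A' a.mulVecLin (e.symm x')) = 0 := by
    ext i
    rw [Pi.zero_apply, lTensor_mulVecLin_apply]
    simp only [he, LinearEquiv.apply_symm_apply]
    exact hrel' i
  have h0 : LinearMap.lTensor A' a.mulVecLin (e.symm x') = 0 :=
    (TensorProduct.piScalarRight A A' A' (Fin r)).map_eq_zero_iff.mp h0'
  obtain ⟨s, hs⟩ := (hexact' _).mp h0
  set z : Fin p → A' := TensorProduct.piScalarRight A A' A' (Fin p) s with hz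
  have hzy : ∀ j, x' j = ∑ k, y k j • z k := by
    intro j
    have h := congrArg (fun t => e t j) hs
    simp only [he, LinearEquiv.apply_symm_apply] at h
    rw [lTensor_mulVecLin_apply] at h
    exact h.symm
  refine ⟨MvPolynomial.aeval z, fun j => ?_⟩
  have h := hzy j
  simp only [hx'] at h
  simp only [map_add, map_sum, map_mul, MvPolynomial.aeval_C, MvPolynomial.aeval_X,
    ← Algebra.smul_def, ← h]
  abel
end

section
/- Let (A, m) be a Noetherian local ring, B a local A-algebra that is finite as an A-module with maximal ideal lying over m. If A has the Artin approximation property, then B has the Artin approximation property. -/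
open IsLocalRing

open AdicCompletion MvPolynomial

set_option linter.unusedSectionVars false
set_option maxHeartbeats 1600000

namespace AAux

theorem smul_top_pow {R : Type*} [CommRing R] (I : Ideal R) (n : ℕ) :
    (I ^ n • ⊤ : Ideal R) = I ^ n := by ext x; simp

variable {A B : Type*} [CommRing A] [IsLocalRing A] [IsNoetherianRing A]
  [CommRing B] [IsLocalRing B] [Algebra A B] [Module.Finite A B]

theorem pow_le_comap (hloc : Ideal.comap (algebraMap A B) (maximalIdeal B) = maximalIdeal A)
    (n : ℕ) :
    ((maximalIdeal A) ^ n • ⊤ : Ideal A) ≤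
      Ideal.comap (algebraMap A B) ((maximalIdeal B) ^ n • ⊤ : Ideal B) := by
  rw [smul_top_pow, smul_top_pow, ← Ideal.map_le_iff_le_comap, Ideal.map_pow]
  exact Ideal.pow_right_mono (Ideal.map_le_iff_le_comap.mpr hloc.ge) n

/-- The canonical ring hom between completions. -/
noncomputable def complMap
    (hloc : Ideal.comap (algebraMap A B) (maximalIdeal B) = maximalIdeal A) :
    AdicCompletion (maximalIdeal A) A →+* AdicCompletion (maximalIdeal B) B where
  toFun x := ⟨fun n => Ideal.quotientMap _ (algebraMap A B) (pow_le_comap hloc n) (x.val n), by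
    intro m n hmn
    show transitionMap (maximalIdeal B) B hmn
        (Ideal.quotientMap _ (algebraMap A B) (pow_le_comap hloc n) (x.val n)) =
      Ideal.quotientMap _ (algebraMap A B) (pow_le_comap hloc m) (x.val m)
    obtain ⟨a, ha⟩ := Ideal.Quotient.mk_surjective (x.val n)
    have hx := x.property hmn
    rw [← ha] at hx ⊢
    rw [Ideal.quotientMap_mk, transitionMap_ideal_mk, ← hx, transitionMap_ideal_mk,
      Ideal.quotientMap_mk]⟩
  map_one' := Subtype.ext <| funext fun n => map_one _
  map_mul' x y := Subtype.ext <| funext fun n => map_mul _ _ _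
  map_zero' := Subtype.ext <| funext fun n => map_zero _
  map_add' x y := Subtype.ext <| funext fun n => map_add _ _ _


@[simp] theorem complMap_val (x : AdicCompletion (maximalIdeal A) A) (n : ℕ) :
    (complMap hloc x).val n =
      Ideal.quotientMap _ (algebraMap A B) (pow_le_comap hloc n) (x.val n) := rfl

theorem complMap_algebraMap
    (hloc : Ideal.comap (algebraMap A B) (maximalIdeal B) = maximalIdeal A) (a : A) :
    complMap hloc (algebraMap A (AdicCompletion (maximalIdeal A) A) a) =
      algebraMap B (AdicCompletion (maximalIdeal B) B) (algebraMap A B a) := by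
  apply Subtype.ext
  funext n
  show Ideal.quotientMap _ _ _ (Ideal.Quotient.mk _ a) = _
  rw [Ideal.quotientMap_mk]
  rfl

theorem complMap_mem_map
    (hloc : Ideal.comap (algebraMap A B) (maximalIdeal B) = maximalIdeal A)
    {c : ℕ} {w : AdicCompletion (maximalIdeal A) A}
    (hw : w ∈ Ideal.map (algebraMap A (AdicCompletion (maximalIdeal A) A)) (maximalIdeal A ^ c)) :
    complMap hloc w ∈
      Ideal.map (algebraMap B (AdicCompletion (maximalIdeal B) B)) (maximalIdeal B ^ c) := by
  have h1 : Ideal.map (complMap hloc)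
      (Ideal.map (algebraMap A (AdicCompletion (maximalIdeal A) A)) (maximalIdeal A ^ c)) ≤
      Ideal.map (algebraMap B (AdicCompletion (maximalIdeal B) B)) (maximalIdeal B ^ c) := by
    rw [Ideal.map_map]
    have h2 : (complMap hloc).comp (algebraMap A (AdicCompletion (maximalIdeal A) A)) =
        (algebraMap B (AdicCompletion (maximalIdeal B) B)).comp (algebraMap A B) :=
      RingHom.ext (complMap_algebraMap hloc)
    rw [h2, ← Ideal.map_map]
    apply Ideal.map_mono
    rw [Ideal.map_pow]
    exact Ideal.pow_right_mono (Ideal.map_le_iff_le_comap.mpr hloc.ge) c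
  exact h1 (Ideal.mem_map_of_mem _ hw)


theorem exists_pow_le_map
    (hloc : Ideal.comap (algebraMap A B) (maximalIdeal B) = maximalIdeal A) :
    ∃ k : ℕ, 0 < k ∧
      (maximalIdeal B) ^ k ≤ Ideal.map (algebraMap A B) (maximalIdeal A) := by
  set IB := Ideal.map (algebraMap A B) (maximalIdeal A) with hIB
  have hIBJ : IB ≤ maximalIdeal B := Ideal.map_le_iff_le_comap.mpr hloc.ge
  letI : Field (A ⧸ maximalIdeal A) := Ideal.Quotient.field _
  have h1 : Module.Finite A (B ⧸ IB) := Module.Finite.of_surjective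
    (IsScalarTower.toAlgHom A B (B ⧸ IB)).toLinearMap (Ideal.Quotient.mk_surjective (I := IB))
  have h2 : Module.Finite (A ⧸ maximalIdeal A) (B ⧸ IB) :=
    Module.Finite.of_restrictScalars_finite A _ _
  have h3 : IsArtinianRing (B ⧸ IB) := isArtinian_of_tower (A ⧸ maximalIdeal A) inferInstance
  have hne : IB ≠ ⊤ := fun h => (maximalIdeal.isMaximal B).ne_top (top_le_iff.mp (h ▸ hIBJ))
  haveI : Nontrivial (B ⧸ IB) := Ideal.Quotient.nontrivial_iff.mpr hne
  haveI : IsLocalRing (B ⧸ IB) :=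
    IsLocalRing.of_surjective' (Ideal.Quotient.mk IB) Ideal.Quotient.mk_surjective
  have hJq : Ideal.map (Ideal.Quotient.mk IB) (maximalIdeal B) ≠ ⊤ := by
    intro h
    have hcm := Ideal.comap_map_of_surjective (Ideal.Quotient.mk IB)
      Ideal.Quotient.mk_surjective (maximalIdeal B)
    rw [h, Ideal.comap_top] at hcm
    have : maximalIdeal B ⊔ Ideal.comap (Ideal.Quotient.mk IB) ⊥ = maximalIdeal B := by
      rw [sup_eq_left]
      intro x hx
      simp only [Ideal.mem_comap, Ideal.mem_bot] at hx
      exact hIBJ (Ideal.Quotient.eq_zero_iff_mem.mp hx)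
    rw [this] at hcm
    exact (maximalIdeal.isMaximal B).ne_top hcm.symm
  have hle : Ideal.map (Ideal.Quotient.mk IB) (maximalIdeal B) ≤
      Ideal.jacobson (⊥ : Ideal (B ⧸ IB)) := by
    rw [jacobson_eq_maximalIdeal (⊥ : Ideal (B ⧸ IB)) bot_ne_top]
    exact le_maximalIdeal hJq
  obtain ⟨m, hm⟩ := IsArtinianRing.isNilpotent_jacobson_bot (R := B ⧸ IB)
  refine ⟨m + 1, Nat.succ_pos m, fun x hx => ?_⟩
  have hx2 : Ideal.Quotient.mk IB x ∈
      (Ideal.map (Ideal.Quotient.mk IB) (maximalIdeal B)) ^ (m + 1) := by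
    rw [← Ideal.map_pow]
    exact Ideal.mem_map_of_mem _ hx
  have hb : (Ideal.map (Ideal.Quotient.mk IB) (maximalIdeal B)) ^ (m + 1) = ⊥ := by
    apply le_bot_iff.mp
    calc (Ideal.map (Ideal.Quotient.mk IB) (maximalIdeal B)) ^ (m + 1)
        ≤ (Ideal.jacobson (⊥ : Ideal (B ⧸ IB))) ^ (m + 1) := Ideal.pow_right_mono hle _
      _ ≤ (Ideal.jacobson (⊥ : Ideal (B ⧸ IB))) ^ m := Ideal.pow_le_pow_right (Nat.le_succ m)
      _ = ⊥ := hm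
  rw [hb] at hx2
  exact Ideal.Quotient.eq_zero_iff_mem.mp (Ideal.mem_bot.mp hx2)


/-- Substituting `Y j = ∑ k, X (j,k) * s k`. -/
noncomputable def thetaMap (n r : ℕ) (s : Fin r → B) :
    MvPolynomial (Fin n) B →+* MvPolynomial (Fin n × Fin r) B :=
  eval₂Hom C (fun j => ∑ k, X (j, k) * C (s k))

theorem exists_G {n r : ℕ} {s : Fin r → B} (hs : Submodule.span A (Set.range s) = ⊤)
    (p : MvPolynomial (Fin n) B) :
    ∃ G : Fin r → MvPolynomial (Fin n × Fin r) A,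
      thetaMap n r s p =
        ∑ k, (MvPolynomial.map (algebraMap A B) (G k)) * C (s k) := by
  suffices h : ∀ P : MvPolynomial (Fin n × Fin r) B,
      ∃ G : Fin r → MvPolynomial (Fin n × Fin r) A,
        P = ∑ k, (MvPolynomial.map (algebraMap A B) (G k)) * C (s k) from h _
  intro P
  induction P using MvPolynomial.induction_on with
  | C b =>
      have hb : b ∈ Submodule.span A (Set.range s) := hs ▸ Submodule.mem_top
      obtain ⟨a, ha⟩ := (Submodule.mem_span_range_iff_exists_fun A).mp hb
      refine ⟨fun k => C (a k), ?_⟩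
      rw [← ha, map_sum]
      congr 1
      funext k
      rw [map_C, ← C_mul, Algebra.smul_def]
  | add p q hp hq =>
      obtain ⟨G, hG⟩ := hp
      obtain ⟨G', hG'⟩ := hq
      refine ⟨fun k => G k + G' k, ?_⟩
      rw [hG, hG', ← Finset.sum_add_distrib]
      congr 1
      funext k
      rw [map_add, add_mul]
  | mul_X p i hp =>
      obtain ⟨G, hG⟩ := hp
      refine ⟨fun k => G k * X i, ?_⟩
      rw [hG, Finset.sum_mul]
      congr 1
      funext k
      rw [map_mul, map_X]
      ring

theorem eval_G {n r : ℕ} {s : Fin r → B} {C' R : Type*} [CommRing C'] [CommRing R] [Algebra A R]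
    (φ : B →+* C') (ψ : R →+* C')
    (hcomp : ψ.comp (algebraMap A R) = φ.comp (algebraMap A B))
    (x : Fin n × Fin r → R) (p : MvPolynomial (Fin n) B)
    (G : Fin r → MvPolynomial (Fin n × Fin r) A)
    (hG : thetaMap n r s p =
      ∑ k, (MvPolynomial.map (algebraMap A B) (G k)) * C (s k)) :
    eval₂ φ (fun j => ∑ k, ψ (x (j, k)) * φ (s k)) p
      = ∑ k, ψ (eval₂ (algebraMap A R) x (G k)) * φ (s k) := by
  have key : (eval₂Hom φ (fun j => ∑ k, ψ (x (j, k)) * φ (s k))) =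
      ((eval₂Hom φ (fun jk => ψ (x jk))).comp (thetaMap n r s)) := by
    apply MvPolynomial.ringHom_ext
    · intro b
      simp [thetaMap]
    · intro j
      simp [thetaMap]
  have h1 : eval₂ φ (fun j => ∑ k, ψ (x (j, k)) * φ (s k)) p
      = eval₂Hom φ (fun jk => ψ (x jk)) (thetaMap n r s p) := by
    have := congrFun (congrArg (fun (g : MvPolynomial (Fin n) B →+* C') => (g : _ → C')) key) p
    simpa using this
  rw [h1, hG, map_sum]
  congr 1
  funext k
  rw [map_mul]
  congr 1
  · rw [coe_eval₂Hom, eval₂_map, ← hcomp]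
    exact (eval₂_comp_left ψ (algebraMap A R) x (G k)).symm
  · simp



theorem coord_mem {r m : ℕ} {u : Fin r → A}
    (hu : u ∈ ((maximalIdeal A) ^ m • ⊤ : Submodule A (Fin r → A))) (k : Fin r) :
    u k ∈ ((maximalIdeal A) ^ m • ⊤ : Submodule A A) := by
  have hle : ((maximalIdeal A) ^ m • ⊤ : Submodule A (Fin r → A)) ≤
      Submodule.comap (LinearMap.proj k : (Fin r → A) →ₗ[A] A) ((maximalIdeal A) ^ m • ⊤ : Submodule A A) := by
    rw [Submodule.smul_le]
    intro c hc x _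
    simp only [Submodule.mem_comap, LinearMap.proj_apply, Pi.smul_apply]
    exact Submodule.smul_mem_smul hc Submodule.mem_top
  exact hle hu

theorem mem_pi {r m : ℕ} {u : Fin r → A} (hu : ∀ k, u k ∈ (maximalIdeal A) ^ m) :
    u ∈ ((maximalIdeal A) ^ m • ⊤ : Submodule A (Fin r → A)) := by
  classical
  rw [← Finset.univ_sum_single u]
  apply Submodule.sum_mem
  intro k _
  have h : Pi.single k (u k) = u k • (Pi.single k 1 : Fin r → A) := by
    ext j
    by_cases h : j = k
    · subst h; simp
    · simp [Pi.single_apply, h]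
  rw [h]
  exact Submodule.smul_mem_smul (hu k) Submodule.mem_top

theorem exists_rep {k₀ : ℕ}
    (hk : (maximalIdeal B) ^ k₀ ≤ Ideal.map (algebraMap A B) (maximalIdeal A))
    {r : ℕ} {s : Fin r → B} (hs : Submodule.span A (Set.range s) = ⊤)
    (m : ℕ) (y : B) (hy : y ∈ (maximalIdeal B) ^ (k₀ * m)) :
    ∃ u : Fin r → A, u ∈ ((maximalIdeal A) ^ m • ⊤ : Submodule A (Fin r → A)) ∧
      ∑ k, u k • s k = y := by
  have h1 : y ∈ Ideal.map (algebraMap A B) ((maximalIdeal A) ^ m) := by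
    rw [Ideal.map_pow]
    refine Ideal.pow_right_mono hk m ?_
    rwa [pow_mul] at hy
  have h2 : y ∈ ((maximalIdeal A) ^ m • ⊤ : Submodule A B) := by
    rw [Ideal.smul_top_eq_map]
    exact h1
  have h3 : ((maximalIdeal A) ^ m • ⊤ : Submodule A B) =
      Submodule.map (Fintype.linearCombination A s) ((maximalIdeal A) ^ m • ⊤) := by
    rw [Submodule.map_smul'', Submodule.map_top, Fintype.range_linearCombination, hs]
  rw [h3] at h2
  obtain ⟨u, hu, huy⟩ := Submodule.mem_map.mp h2
  refine ⟨u, hu, ?_⟩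
  rwa [Fintype.linearCombination_apply] at huy

theorem exists_coords
    (hloc : Ideal.comap (algebraMap A B) (maximalIdeal B) = maximalIdeal A)
    {k₀ : ℕ} (hk₀ : 0 < k₀)
    (hk : (maximalIdeal B) ^ k₀ ≤ Ideal.map (algebraMap A B) (maximalIdeal A))
    {r : ℕ} {s : Fin r → B} (hs : Submodule.span A (Set.range s) = ⊤)
    (b : AdicCompletion (maximalIdeal B) B) :
    ∃ x : Fin r → AdicCompletion (maximalIdeal A) A,
      b = ∑ k, complMap hloc (x k) *
        algebraMap B (AdicCompletion (maximalIdeal B) B) (s k) := by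
  obtain ⟨β, rfl⟩ := AdicCompletion.mk_surjective (maximalIdeal B) B b
  have hstep : ∀ m : ℕ, ∃ δ : Fin r → A,
      δ ∈ ((maximalIdeal A) ^ m • ⊤ : Submodule A (Fin r → A)) ∧
      ∑ k, δ k • s k = β (k₀ * (m + 1)) - β (k₀ * m) := by
    intro m
    apply exists_rep hk hs
    have hprop := β.property (show k₀ * m ≤ k₀ * (m + 1) from
      Nat.mul_le_mul_left _ (Nat.le_succ m))
    have h2 := SModEq.sub_mem.mp hprop
    have h3 := Submodule.neg_mem _ h2
    rw [neg_sub] at h3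
    rwa [smul_top_pow] at h3
  obtain ⟨a0, -, ha0⟩ := exists_rep hk hs 0 (β 0)
    (by rw [Nat.mul_zero, pow_zero, Ideal.one_eq_top]; exact Submodule.mem_top)
  choose δ hδ hδval using hstep
  let a : ℕ → Fin r → A := fun m => Nat.rec a0 (fun m am => am + δ m) m
  have hastep : ∀ m, a (m + 1) = a m + δ m := fun m => rfl
  have haval : ∀ m, ∑ k, a m k • s k = β (k₀ * m) := by
    intro m
    induction m with
    | zero => rw [Nat.mul_zero]; exact ha0
    | succ m ih =>
        rw [hastep]
        simp only [Pi.add_apply, add_smul, Finset.sum_add_distrib, ih, hδval]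
        abel
  have hacau : ∀ m n, m ≤ n →
      a n - a m ∈ ((maximalIdeal A) ^ m • ⊤ : Submodule A (Fin r → A)) := by
    intro m n hmn
    induction n, hmn using Nat.le_induction with
    | base => simpa using Submodule.zero_mem _
    | succ n hmn ih =>
        rw [hastep]
        have heq : a n + δ n - a m = (a n - a m) + δ n := by abel
        rw [heq]
        exact Submodule.add_mem _ ih
          (Submodule.smul_mono_left (Ideal.pow_le_pow_right hmn) (hδ n))
  have hcomp : ∀ k : Fin r, IsAdicCauchy (maximalIdeal A) A (fun m => a m k) := by
    intro k m n hmn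
    rw [SModEq.sub_mem]
    have h1 := coord_mem (hacau m n hmn) k
    have h2 := Submodule.neg_mem _ h1
    simpa using h2
  refine ⟨fun k => AdicCompletion.mk (maximalIdeal A) A ⟨fun m => a m k, hcomp k⟩, ?_⟩
  apply AdicCompletion.ext
  intro m
  rw [AdicCompletion.val_sum_apply]
  have hval : ∀ k : Fin r,
      (complMap hloc (AdicCompletion.mk (maximalIdeal A) A ⟨fun m => a m k, hcomp k⟩) *
        algebraMap B (AdicCompletion (maximalIdeal B) B) (s k)).val m =
      Submodule.Quotient.mk (p := ((maximalIdeal B) ^ m • ⊤ : Submodule B B))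
        (a m k • s k) := by
    intro k
    rw [AdicCompletion.val_mul, complMap_val]
    have h1 : (AdicCompletion.mk (maximalIdeal A) A ⟨fun m => a m k, hcomp k⟩).val m =
        Ideal.Quotient.mk ((maximalIdeal A) ^ m • ⊤ : Ideal A) (a m k) := rfl
    have h2 : (algebraMap B (AdicCompletion (maximalIdeal B) B) (s k)).val m =
        Ideal.Quotient.mk ((maximalIdeal B) ^ m • ⊤ : Ideal B) (s k) := rfl
    rw [h1, h2, Ideal.quotientMap_mk, ← map_mul, ← Algebra.smul_def]
    rfl
  rw [Finset.sum_congr rfl (fun k _ => hval k)]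
  have h4 : (∑ k, Submodule.Quotient.mk (p := ((maximalIdeal B) ^ m • ⊤ : Submodule B B))
      (a m k • s k)) =
      Submodule.Quotient.mk (p := ((maximalIdeal B) ^ m • ⊤ : Submodule B B)) (β (k₀ * m)) := by
    rw [← haval m]
    exact (map_sum (Submodule.mkQ ((maximalIdeal B) ^ m • ⊤ : Submodule B B))
      (fun k => a m k • s k) Finset.univ).symm
  rw [h4]
  have h3 : (AdicCompletion.mk (maximalIdeal B) B β).val m =
      Submodule.Quotient.mk (p := ((maximalIdeal B) ^ m • ⊤ : Submodule B B)) (β m) := rfl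
  rw [h3]
  exact (AdicCauchySequence.mk_eq_mk (Nat.le_mul_of_pos_left m hk₀) β).symm

theorem coords_of_zero
    (hloc : Ideal.comap (algebraMap A B) (maximalIdeal B) = maximalIdeal A)
    {k₀ : ℕ} (hk₀ : 0 < k₀)
    (hk : (maximalIdeal B) ^ k₀ ≤ Ideal.map (algebraMap A B) (maximalIdeal A))
    {r t : ℕ} {s : Fin r → B} (hs : Submodule.span A (Set.range s) = ⊤)
    {v : Fin t → Fin r → A}
    (hv : Submodule.span A (Set.range v) = LinearMap.ker (Fintype.linearCombination A s))
    (x : Fin r → AdicCompletion (maximalIdeal A) A)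
    (hx : ∑ k, complMap hloc (x k) *
      algebraMap B (AdicCompletion (maximalIdeal B) B) (s k) = 0) :
    ∃ lam : Fin t → AdicCompletion (maximalIdeal A) A,
      ∀ k, x k = ∑ i, lam i * algebraMap A (AdicCompletion (maximalIdeal A) A) (v i k) := by
  classical
  choose α hα using fun k => AdicCompletion.mk_surjective (maximalIdeal A) A (x k)
  set a : ℕ → Fin r → A := fun m k => α k m with hadef
  have hacau : ∀ m n, m ≤ n →
      a n - a m ∈ ((maximalIdeal A) ^ m • ⊤ : Submodule A (Fin r → A)) := by
    intro m n hmn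
    apply mem_pi
    intro k
    have h1 := SModEq.sub_mem.mp ((α k).property hmn)
    have h2 := Submodule.neg_mem _ h1
    rw [neg_sub] at h2
    rw [← smul_top_pow (maximalIdeal A) m]
    simpa using h2
  have hπ : ∀ m, ∑ k, a m k • s k ∈ (maximalIdeal B) ^ m := by
    intro m
    have h1 : (∑ k, complMap hloc (x k) *
        algebraMap B (AdicCompletion (maximalIdeal B) B) (s k)).val m = 0 := by
      rw [hx]; rfl
    rw [AdicCompletion.val_sum_apply] at h1
    have h2 : ∀ k : Fin r, (complMap hloc (x k) *
        algebraMap B (AdicCompletion (maximalIdeal B) B) (s k)).val m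
        = Submodule.Quotient.mk (p := ((maximalIdeal B) ^ m • ⊤ : Submodule B B))
          (a m k • s k) := by
      intro k
      rw [AdicCompletion.val_mul, complMap_val, ← hα k]
      have hmk : (AdicCompletion.mk (maximalIdeal A) A (α k)).val m =
          Ideal.Quotient.mk ((maximalIdeal A) ^ m • ⊤ : Ideal A) (α k m) := rfl
      have h2' : (algebraMap B (AdicCompletion (maximalIdeal B) B) (s k)).val m =
          Ideal.Quotient.mk ((maximalIdeal B) ^ m • ⊤ : Ideal B) (s k) := rfl
      rw [hmk, h2', Ideal.quotientMap_mk, ← map_mul, ← Algebra.smul_def]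
      rfl
    rw [Finset.sum_congr rfl (fun k _ => h2 k)] at h1
    have h3 : Submodule.Quotient.mk (p := ((maximalIdeal B) ^ m • ⊤ : Submodule B B))
        (∑ k, a m k • s k) = 0 := by
      rw [← h1]
      exact map_sum (Submodule.mkQ ((maximalIdeal B) ^ m • ⊤ : Submodule B B))
        (fun k => a m k • s k) Finset.univ
    have h4 := (Submodule.Quotient.mk_eq_zero _).mp h3
    rwa [smul_top_pow] at h4
  obtain ⟨c, hc⟩ := Ideal.exists_pow_inf_eq_pow_smul (maximalIdeal A)
    (LinearMap.ker (Fintype.linearCombination A s))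
  have hwex : ∀ m, ∃ w : Fin r → A,
      w ∈ ((maximalIdeal A) ^ m • ⊤ : Submodule A (Fin r → A)) ∧
      ∑ k, w k • s k = ∑ k, a (k₀ * m) k • s k :=
    fun m => exists_rep hk hs m _ (hπ (k₀ * m))
  choose w hw hwval using hwex
  set u : ℕ → Fin r → A := fun m => a (k₀ * m) - w m with hudef
  have huker : ∀ m, u m ∈ LinearMap.ker (Fintype.linearCombination A s) := by
    intro m
    rw [LinearMap.mem_ker, map_sub, Fintype.linearCombination_apply,
      Fintype.linearCombination_apply, hwval m, sub_self]
  have hudiff : ∀ m, u (m + 1) - u m ∈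
      ((maximalIdeal A) ^ m • ⊤ : Submodule A (Fin r → A)) := by
    intro m
    have h1 : u (m + 1) - u m = ((a (k₀ * (m + 1)) - a (k₀ * m)) - w (m + 1)) + w m := by
      simp only [hudef]; abel
    rw [h1]
    refine Submodule.add_mem _ (Submodule.sub_mem _ ?_ ?_) (hw m)
    · exact Submodule.smul_mono_left
        (Ideal.pow_le_pow_right (Nat.le_mul_of_pos_left m hk₀))
        (hacau _ _ (Nat.mul_le_mul_left _ (Nat.le_succ m)))
    · exact Submodule.smul_mono_left (Ideal.pow_le_pow_right (Nat.le_succ m)) (hw (m + 1))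
  have hsmul : ∀ m, u (c + m + 1) - u (c + m) ∈
      (maximalIdeal A) ^ m • (LinearMap.ker (Fintype.linearCombination A s)) := by
    intro m
    have h2 : u (c + m + 1) - u (c + m) ∈
        ((maximalIdeal A) ^ (c + m) • ⊤ : Submodule A (Fin r → A)) ⊓
          LinearMap.ker (Fintype.linearCombination A s) :=
      ⟨hudiff (c + m), Submodule.sub_mem _ (huker _) (huker _)⟩
    rw [hc (c + m) (Nat.le_add_right c m)] at h2
    have h3 : c + m - c = m := by omega
    rw [h3] at h2
    exact Submodule.smul_mono le_rfl inf_le_right h2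
  have hμex : ∀ m, ∃ μ : Fin t → A, (∀ i, μ i ∈ (maximalIdeal A) ^ m) ∧
      ∑ i, μ i • v i = u (c + m + 1) - u (c + m) := by
    intro m
    have h2 := hsmul m
    rw [← hv, Submodule.mem_ideal_smul_span_iff_exists_sum] at h2
    obtain ⟨aF, haF, hsum⟩ := h2
    refine ⟨fun i => aF i, fun i => haF i, ?_⟩
    rw [← hsum, Finsupp.sum_fintype]
    intro i
    exact zero_smul _ _
  choose μ hμ hμval using hμex
  have hucspan : u c ∈ Submodule.span A (Set.range v) := by
    rw [hv]; exact huker c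
  obtain ⟨κ, hκ⟩ := (Submodule.mem_span_range_iff_exists_fun A).mp hucspan
  set Λ : ℕ → Fin t → A := fun m => κ + ∑ j ∈ Finset.range m, μ j with hΛdef
  have hΛval : ∀ m, ∑ i, Λ m i • v i = u (c + m) := by
    intro m
    induction m with
    | zero => simpa [hΛdef] using hκ
    | succ m ih =>
        have hstep : Λ (m + 1) = Λ m + μ m := by
          rw [hΛdef]; simp [Finset.sum_range_succ]; abel
        rw [hstep]
        simp only [Pi.add_apply, add_smul, Finset.sum_add_distrib, ih, hμval]
        abel
  have hΛcau : ∀ i, IsAdicCauchy (maximalIdeal A) A (fun m => Λ m i) := by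
    intro i
    rw [isAdicCauchy_iff]
    intro m
    rw [SModEq.sub_mem]
    have h1 : Λ m i - Λ (m + 1) i = -(μ m i) := by
      rw [hΛdef]; simp [Finset.sum_range_succ]
    rw [h1]
    apply Submodule.neg_mem
    rw [smul_top_pow]
    exact hμ m i
  refine ⟨fun i => AdicCompletion.mk (maximalIdeal A) A ⟨fun m => Λ m i, hΛcau i⟩,
    fun k => ?_⟩
  apply AdicCompletion.ext
  intro m
  rw [AdicCompletion.val_sum_apply]
  have hval : ∀ i : Fin t,
      (AdicCompletion.mk (maximalIdeal A) A ⟨fun m => Λ m i, hΛcau i⟩ *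
        algebraMap A (AdicCompletion (maximalIdeal A) A) (v i k)).val m =
      Submodule.Quotient.mk (p := ((maximalIdeal A) ^ m • ⊤ : Submodule A A))
        (Λ m i * v i k) := by
    intro i
    rw [AdicCompletion.val_mul]
    have hmk : (AdicCompletion.mk (maximalIdeal A) A ⟨fun m => Λ m i, hΛcau i⟩).val m =
        Ideal.Quotient.mk ((maximalIdeal A) ^ m • ⊤ : Ideal A) (Λ m i) := rfl
    have h2' : (algebraMap A (AdicCompletion (maximalIdeal A) A) (v i k)).val m =
        Ideal.Quotient.mk ((maximalIdeal A) ^ m • ⊤ : Ideal A) (v i k) := rfl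
    rw [hmk, h2', ← map_mul]
    rfl
  rw [Finset.sum_congr rfl (fun i _ => hval i)]
  have h4 : (∑ i, Submodule.Quotient.mk (p := ((maximalIdeal A) ^ m • ⊤ : Submodule A A))
      (Λ m i * v i k)) =
      Submodule.Quotient.mk (p := ((maximalIdeal A) ^ m • ⊤ : Submodule A A))
        (u (c + m) k) := by
    have h5 : u (c + m) k = ∑ i, Λ m i * v i k := by
      have := congrFun (hΛval m) k
      simpa [Finset.sum_apply, smul_eq_mul] using this.symm
    rw [h5]
    exact (map_sum (Submodule.mkQ ((maximalIdeal A) ^ m • ⊤ : Submodule A A))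
      (fun i => Λ m i * v i k) Finset.univ).symm
  rw [h4, ← hα k]
  have hxk : (AdicCompletion.mk (maximalIdeal A) A (α k)).val m =
      Submodule.Quotient.mk (p := ((maximalIdeal A) ^ m • ⊤ : Submodule A A)) (a m k) := rfl
  rw [hxk]
  rw [Submodule.Quotient.eq]
  have hdiff : a m - u (c + m) = -(a (k₀ * (c + m)) - a m) + w (c + m) := by
    simp only [hudef]; abel
  have hmem : a m - u (c + m) ∈ ((maximalIdeal A) ^ m • ⊤ : Submodule A (Fin r → A)) := by
    rw [hdiff]
    refine Submodule.add_mem _ (Submodule.neg_mem _ ?_) ?_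
    · exact hacau m (k₀ * (c + m))
        (le_trans (Nat.le_add_left m c) (Nat.le_mul_of_pos_left (c + m) hk₀))
    · exact Submodule.smul_mono_left
        (Ideal.pow_le_pow_right (Nat.le_add_left m c)) (hw (c + m))
  have := coord_mem hmem k
  simpa using this

theorem approx_of_fintype {A : Type*} [CommRing A] [IsLocalRing A]
    (hA : HasArtinApprox A) {ι κ : Type*} [Fintype ι] [Fintype κ]
    (f : κ → MvPolynomial ι A) (yh : ι → AdicCompl A)
    (hy : ∀ i, MvPolynomial.aeval yh (f i) = 0) (c : ℕ) :
    ∃ y : ι → A, (∀ i, MvPolynomial.aeval y (f i) = 0) ∧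
      ∀ j, algebraMap A (AdicCompl A) (y j) - yh j ∈
        Ideal.map (algebraMap A (AdicCompl A)) (maximalIdeal A ^ c) := by
  classical
  let e := Fintype.equivFin ι
  let e2 := Fintype.equivFin κ
  let f' : Fin (Fintype.card κ) → MvPolynomial (Fin (Fintype.card ι)) A :=
    fun i => rename e (f (e2.symm i))
  have h0 : ∀ i, MvPolynomial.aeval (yh ∘ e.symm) (f' i) = 0 := by
    intro i
    show MvPolynomial.aeval (yh ∘ e.symm) (rename e (f (e2.symm i))) = 0
    rw [aeval_rename]
    have he : (yh ∘ e.symm) ∘ e = yh := by funext j; simp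
    rw [he]
    exact hy _
  obtain ⟨y', h1, h2⟩ := hA _ _ f' (yh ∘ e.symm) h0 c
  refine ⟨y' ∘ e, fun i => ?_, fun j => ?_⟩
  · have h3 := h1 (e2 i)
    have h4 : f' (e2 i) = rename e (f i) := by simp [f']
    rw [h4, aeval_rename] at h3
    exact h3
  · have h5 := h2 (e j)
    simpa using h5

theorem main {A B : Type*} [CommRing A] [IsLocalRing A] [IsNoetherianRing A]
    [CommRing B] [IsLocalRing B] [Algebra A B] [Module.Finite A B]
    (hloc : Ideal.comap (algebraMap A B) (maximalIdeal B) = maximalIdeal A)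
    (hA : HasArtinApprox A) : HasArtinApprox B := by
  intro n q f yh hyh c
  classical
  obtain ⟨k₀, hk₀, hk⟩ := exists_pow_le_map hloc
  obtain ⟨r, s, hs⟩ := Module.Finite.exists_fin (R := A) (M := B)
  obtain ⟨t, v, hv⟩ := Submodule.fg_iff_exists_fin_generating_family.mp
    (IsNoetherian.noetherian (LinearMap.ker (Fintype.linearCombination A s)))
  choose G hG using fun i : Fin q => exists_G hs (f i)
  choose xh hxh using fun j => exists_coords hloc hk₀ hk hs (yh j)
  set ξ : Fin n × Fin r → AdicCompl A := fun jk => xh jk.1 jk.2 with hξ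
  have hcomp : (complMap hloc).comp (algebraMap A (AdicCompl A)) =
      (algebraMap B (AdicCompl B)).comp (algebraMap A B) :=
    RingHom.ext (complMap_algebraMap hloc)
  have hval : ∀ i, ∑ k, complMap hloc
      (eval₂ (algebraMap A (AdicCompl A)) ξ (G i k)) *
      algebraMap B (AdicCompl B) (s k) = 0 := by
    intro i
    have h1 := eval_G (algebraMap B (AdicCompl B)) (complMap hloc) hcomp ξ (f i) (G i) (hG i)
    rw [← h1]
    have h2 : (fun j => ∑ k, complMap hloc (ξ (j, k)) *
        algebraMap B (AdicCompl B) (s k)) = yh := by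
      funext j
      exact (hxh j).symm
    rw [h2, ← aeval_def]
    exact hyh i
  choose lam hlam using fun i => coords_of_zero hloc hk₀ hk hs hv _ (hval i)
  set F : Fin q × Fin r → MvPolynomial ((Fin n × Fin r) ⊕ (Fin q × Fin t)) A := fun ik =>
    rename Sum.inl (G ik.1 ik.2) -
      ∑ i, X (Sum.inr (ik.1, i)) * C (v i ik.2) with hF
  set Z : ((Fin n × Fin r) ⊕ (Fin q × Fin t)) → AdicCompl A :=
    Sum.elim ξ (fun iu => lam iu.1 iu.2) with hZ
  have hZval : ∀ ik, MvPolynomial.aeval Z (F ik) = 0 := by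
    rintro ⟨i, k⟩
    rw [hF]
    rw [map_sub]
    have hA1 : MvPolynomial.aeval Z (rename Sum.inl (G i k)) =
        eval₂ (algebraMap A (AdicCompl A)) ξ (G i k) := by
      rw [aeval_rename]
      rfl
    have hA2 : MvPolynomial.aeval Z (∑ u, X (Sum.inr (i, u)) * C (v u k)) =
        ∑ u, lam i u * algebraMap A (AdicCompl A) (v u k) := by
      rw [map_sum]
      apply Finset.sum_congr rfl
      intro u _
      rw [map_mul, aeval_X, aeval_C]
      rfl
    rw [hA1, hA2, hlam i k, sub_self]
  obtain ⟨z, hz1, hz2⟩ := approx_of_fintype hA F Z hZval c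
  refine ⟨fun j => ∑ k, z (Sum.inl (j, k)) • s k, fun i => ?_, fun j => ?_⟩
  · have hcomp2 : (algebraMap A B).comp (algebraMap A A) =
        (algebraMap B B).comp (algebraMap A B) := by
      ext a; simp
    have h1 := eval_G (algebraMap B B) (algebraMap A B) hcomp2
      (fun jk => z (Sum.inl jk)) (f i) (G i) (hG i)
    rw [aeval_def]
    have hy' : (fun j => ∑ k, algebraMap A B (z (Sum.inl (j, k))) * algebraMap B B (s k)) =
        (fun j => ∑ k, z (Sum.inl (j, k)) • s k) := by
      funext j
      apply Finset.sum_congr rfl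
      intro k _
      rw [Algebra.smul_def]
      simp
    rw [← hy', h1]
    have hval2 : ∀ k, eval₂ (algebraMap A A) (fun jk => z (Sum.inl jk)) (G i k) =
        ∑ u, z (Sum.inr (i, u)) * v u k := by
      intro k
      have h3 := hz1 (i, k)
      rw [hF] at h3
      rw [map_sub, sub_eq_zero] at h3
      have h4 : MvPolynomial.aeval z (rename Sum.inl (G i k)) =
          eval₂ (algebraMap A A) (fun jk => z (Sum.inl jk)) (G i k) := by
        rw [aeval_rename]
        rfl
      have h5 : MvPolynomial.aeval z (∑ u, X (Sum.inr (i, u)) * C (v u k)) =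
          ∑ u, z (Sum.inr (i, u)) * v u k := by
        rw [map_sum]
        apply Finset.sum_congr rfl
        intro u _
        simp only [map_mul, aeval_X, aeval_C, Algebra.algebraMap_self, RingHom.id_apply]
      rw [h4, h5] at h3
      exact h3
    rw [Finset.sum_congr rfl (fun k _ => by rw [hval2 k])]
    have hker : ∀ u, ∑ k, v u k • s k = 0 := by
      intro u
      have hmem : v u ∈ LinearMap.ker (Fintype.linearCombination A s) := by
        rw [← hv]
        exact Submodule.subset_span ⟨u, rfl⟩
      rw [LinearMap.mem_ker, Fintype.linearCombination_apply] at hmem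
      exact hmem
    have hterm : ∀ k, algebraMap A B (∑ u, z (Sum.inr (i, u)) * v u k) * algebraMap B B (s k)
        = ∑ u, algebraMap A B (z (Sum.inr (i, u))) * (v u k • s k) := by
      intro k
      rw [map_sum, Finset.sum_mul]
      apply Finset.sum_congr rfl
      intro u _
      rw [map_mul, Algebra.smul_def]
      simp [mul_assoc]
    rw [Finset.sum_congr rfl (fun k _ => hterm k), Finset.sum_comm]
    have hz0 : ∀ u : Fin t,
        (∑ k, algebraMap A B (z (Sum.inr (i, u))) * (v u k • s k)) = 0 := by
      intro u
      rw [← Finset.mul_sum, hker u, mul_zero]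
    rw [Finset.sum_congr rfl (fun u _ => hz0 u), Finset.sum_const_zero]
  · have hdiff : algebraMap B (AdicCompl B) (∑ k, z (Sum.inl (j, k)) • s k) - yh j =
        ∑ k, complMap hloc (algebraMap A (AdicCompl A) (z (Sum.inl (j, k))) - ξ (j, k)) *
          algebraMap B (AdicCompl B) (s k) := by
      rw [hxh j, map_sum, ← Finset.sum_sub_distrib]
      apply Finset.sum_congr rfl
      intro k _
      rw [map_sub, sub_mul]
      congr 1
      rw [Algebra.smul_def, map_mul, complMap_algebraMap hloc]
    rw [hdiff]
    apply Ideal.sum_mem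
    intro k _
    apply Ideal.mul_mem_right
    apply complMap_mem_map hloc
    exact hz2 (Sum.inl (j, k))

end AAux

/-- If `(A,m)` is a Noetherian local ring with the Artin approximation property and `B` is a
local `A`-algebra which is finite as an `A`-module, with maximal ideal lying over `m`, then
`B` has the Artin approximation property. -/
theorem hasArtinApprox_of_finite (A B : Type*) [CommRing A] [IsLocalRing A]
    [IsNoetherianRing A] [CommRing B] [IsLocalRing B] [Algebra A B] [Module.Finite A B]
    (hloc : Ideal.comap (algebraMap A B) (maximalIdeal B) = maximalIdeal A)
    (hA : HasArtinApprox A) : HasArtinApprox B :=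
  AAux.main hloc hA
end

section
/- Let u : A → A' be a regular morphism of Noetherian rings. If the conclusion of General Neron Desingularization holds (every A-morphism from a finite type A-algebra B to A' factors through a smooth A-algebra), then the module of Kähler differentials Ω_{A'/A} is a flat A'-module. -/
set_option maxHeartbeats 1000000
set_option synthInstance.maxHeartbeats 1000000

universe u

open Finsupp TensorProduct

section Aux

variable (S T U : Type u) [CommRing S] [CommRing T] [CommRing U]
variable [Algebra S T]

/-- The map `(S →₀ S) →ₗ[S] (T →₀ T)` induced by `algebraMap S T`. -/
noncomputable def finsuppAlgMap : (S →₀ S) →ₗ[S] (T →₀ T) :=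
  (Finsupp.mapRange.linearMap (Algebra.linearMap S T)).comp
    (Finsupp.lmapDomain S S (algebraMap S T))

lemma finsuppAlgMap_single (a b : S) :
    finsuppAlgMap S T (Finsupp.single a b) =
      Finsupp.single (algebraMap S T a) (algebraMap S T b) := by
  simp [finsuppAlgMap]

lemma finsuppAlgMap_injective (h : Function.Injective (algebraMap S T)) :
    Function.Injective (finsuppAlgMap S T) := by
  have he : ⇑(finsuppAlgMap S T) =
      (Finsupp.mapRange (algebraMap S T) (map_zero _)) ∘
        (Finsupp.mapDomain (algebraMap S T)) := by
    funext ξ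
    simp [finsuppAlgMap]
    rfl
  rw [he]
  exact (Finsupp.mapRange_injective _ (map_zero _) h).comp (Finsupp.mapDomain_injective h)

lemma finsuppAlgMap_comp [Algebra T U] [Algebra S U] [IsScalarTower S T U] (ξ : S →₀ S) :
    finsuppAlgMap T U (finsuppAlgMap S T ξ) = finsuppAlgMap S U ξ := by
  induction ξ using Finsupp.induction_linear with
  | zero => simp
  | add f g hf hg => simp only [map_add, hf, hg]
  | single a b =>
      rw [finsuppAlgMap_single, finsuppAlgMap_single, finsuppAlgMap_single,
        ← IsScalarTower.algebraMap_apply, ← IsScalarTower.algebraMap_apply]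

variable (A : Type u) [CommRing A] [Algebra A S] [Algebra A T] [IsScalarTower A S T]

lemma kaehlerMap_linearCombination (ξ : S →₀ S) :
    KaehlerDifferential.map A A S T
        (Finsupp.linearCombination S (KaehlerDifferential.D A S) ξ) =
      Finsupp.linearCombination T (KaehlerDifferential.D A T) (finsuppAlgMap S T ξ) := by
  induction ξ using Finsupp.induction_linear with
  | zero => simp
  | add f g hf hg => simp only [map_add, hf, hg]
  | single a b =>
      rw [finsuppAlgMap_single, Finsupp.linearCombination_single,
        Finsupp.linearCombination_single, LinearMap.map_smul, KaehlerDifferential.map_D,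
        algebraMap_smul]

lemma kaehlerMap_comp [Algebra T U] [Algebra S U] [IsScalarTower S T U]
    [Algebra A U] [IsScalarTower A S U] [IsScalarTower A T U] (ω : Ω[S⁄A]) :
    KaehlerDifferential.map A A T U (KaehlerDifferential.map A A S T ω) =
      KaehlerDifferential.map A A S U ω := by
  obtain ⟨ξ, rfl⟩ := KaehlerDifferential.linearCombination_surjective A S ω
  rw [kaehlerMap_linearCombination, kaehlerMap_linearCombination,
    kaehlerMap_linearCombination, finsuppAlgMap_comp]

end Aux

section Stage

variable (A A' : Type u) [CommRing A] [CommRing A'] [Algebra A A']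

lemma subalgebra_algebraMap_coe (B : Subalgebra A A') (b : ↥B) :
    algebraMap (↥B) A' b = (b : A') := rfl

lemma gen_stage {g : A' →₀ A'}
    (hg : g ∈ (((Set.range fun x : A' × A' =>
        Finsupp.single x.1 1 + Finsupp.single x.2 1 - Finsupp.single (x.1 + x.2) 1) ∪
      Set.range fun x : A' × A' =>
        Finsupp.single x.2 x.1 + Finsupp.single x.1 x.2 - Finsupp.single (x.1 * x.2) 1) ∪
      Set.range fun x : A => Finsupp.single (algebraMap A A' x) 1)) :
    ∃ P : Finset A', ∀ B : Subalgebra A A', (↑P : Set A') ⊆ B →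
      ∃ η ∈ KaehlerDifferential.kerTotal A B, finsuppAlgMap (↥B) A' η = g := by
  classical
  rcases hg with ((⟨⟨x, y⟩, rfl⟩ | ⟨⟨x, y⟩, rfl⟩) | ⟨r, rfl⟩)
  · refine ⟨{x, y}, fun B hB => ?_⟩
    have hx : x ∈ B := hB (by simp)
    have hy : y ∈ B := hB (by simp)
    refine ⟨Finsupp.single ⟨x, hx⟩ 1 + Finsupp.single ⟨y, hy⟩ 1 -
        Finsupp.single (⟨x, hx⟩ + ⟨y, hy⟩) 1, ?_, ?_⟩
    · exact Submodule.subset_span (Set.mem_union_left _ (Set.mem_union_left _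
        ⟨(⟨x, hx⟩, ⟨y, hy⟩), rfl⟩))
    · rw [map_sub, map_add, finsuppAlgMap_single, finsuppAlgMap_single, finsuppAlgMap_single]
      simp [subalgebra_algebraMap_coe]
  · refine ⟨{x, y}, fun B hB => ?_⟩
    have hx : x ∈ B := hB (by simp)
    have hy : y ∈ B := hB (by simp)
    refine ⟨Finsupp.single ⟨y, hy⟩ ⟨x, hx⟩ + Finsupp.single ⟨x, hx⟩ ⟨y, hy⟩ -
        Finsupp.single (⟨x, hx⟩ * ⟨y, hy⟩) 1, ?_, ?_⟩
    · exact Submodule.subset_span (Set.mem_union_left _ (Set.mem_union_right _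
        ⟨(⟨x, hx⟩, ⟨y, hy⟩), rfl⟩))
    · rw [map_sub, map_add, finsuppAlgMap_single, finsuppAlgMap_single, finsuppAlgMap_single]
      simp [subalgebra_algebraMap_coe]
  · refine ⟨∅, fun B _ => ?_⟩
    refine ⟨Finsupp.single (algebraMap A (↥B) r) 1, ?_, ?_⟩
    · exact Submodule.subset_span (Set.mem_union_right _ ⟨r, rfl⟩)
    · rw [finsuppAlgMap_single, ← IsScalarTower.algebraMap_apply]
      simp

lemma finsupp_stage (ξ : A' →₀ A') :
    ∃ P : Finset A', ∀ B : Subalgebra A A', (↑P : Set A') ⊆ B →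
      ∃ ξ' : ↥B →₀ ↥B, finsuppAlgMap (↥B) A' ξ' = ξ := by
  classical
  refine ⟨ξ.support ∪ ξ.support.image ξ, fun B hB => ?_⟩
  have hk1 : ∀ k ∈ ξ.support, k ∈ B := fun k hk =>
    hB (Finset.mem_coe.mpr (Finset.mem_union_left _ hk))
  have hk2 : ∀ k ∈ ξ.support, ξ k ∈ B := fun k hk =>
    hB (Finset.mem_coe.mpr (Finset.mem_union_right _ (Finset.mem_image_of_mem _ hk)))
  refine ⟨∑ k ∈ ξ.support.attach,
      Finsupp.single (⟨k.1, hk1 k.1 k.2⟩ : ↥B) (⟨ξ k.1, hk2 k.1 k.2⟩ : ↥B), ?_⟩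
  rw [map_sum]
  simp only [finsuppAlgMap_single, subalgebra_algebraMap_coe]
  conv_rhs => rw [← Finsupp.sum_single ξ, Finsupp.sum, ← Finset.sum_attach ξ.support
    (fun k => Finsupp.single k (ξ k))]

lemma stage {ι : Type*} [Fintype ι] (f : ι → A') (x : ι → Ω[A'⁄A])
    (hfx : ∑ i, f i • x i = 0) :
    ∃ (B : Subalgebra A A') (_ : Algebra.FiniteType A ↥B) (f' : ι → ↥B) (ω : ι → Ω[↥B⁄A]),
      (∀ i, (f' i : A') = f i) ∧
      (∀ i, KaehlerDifferential.map A A (↥B) A' (ω i) = x i) ∧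
      ∑ i, f' i • ω i = 0 := by
  classical
  choose ξ hξ using fun i =>
    KaehlerDifferential.linearCombination_surjective A A' (x i)
  have hker : (∑ i, f i • ξ i) ∈ KaehlerDifferential.kerTotal A A' := by
    rw [← KaehlerDifferential.kerTotal_eq, LinearMap.mem_ker, map_sum]
    simp only [map_smul, hξ]
    exact hfx
  rw [KaehlerDifferential.kerTotal, Submodule.mem_span_set'] at hker
  obtain ⟨n, c, g, hcg⟩ := hker
  choose Pg hPg using fun j : Fin n => gen_stage A A' (g j).2
  choose Pξ hPξ using fun i : ι => finsupp_stage A A' (ξ i)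
  set P : Finset A' := ((Finset.univ.biUnion Pg ∪ Finset.univ.biUnion Pξ) ∪
    Finset.univ.image f) ∪ Finset.univ.image c with hP
  set B : Subalgebra A A' := Algebra.adjoin A (↑P : Set A') with hBdef
  have hPB : (↑P : Set A') ⊆ B := Algebra.subset_adjoin
  have hft : Algebra.FiniteType A ↥B :=
    (Subalgebra.fg_iff_finiteType _).mp (Subalgebra.fg_adjoin_finset _)
  have hfmem : ∀ i, f i ∈ B := fun i => hPB (Finset.mem_coe.mpr
    (Finset.mem_union_left _ (Finset.mem_union_right _
      (Finset.mem_image_of_mem f (Finset.mem_univ i)))))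
  have hcmem : ∀ j, c j ∈ B := fun j => hPB (Finset.mem_coe.mpr
    (Finset.mem_union_right _ (Finset.mem_image_of_mem c (Finset.mem_univ j))))
  have hPgB : ∀ j, (↑(Pg j) : Set A') ⊆ B := fun j z hz => hPB (Finset.mem_coe.mpr
    (Finset.mem_union_left _ (Finset.mem_union_left _ (Finset.mem_union_left _
      (Finset.mem_biUnion.mpr ⟨j, Finset.mem_univ j, hz⟩)))))
  have hPξB : ∀ i, (↑(Pξ i) : Set A') ⊆ B := fun i z hz => hPB (Finset.mem_coe.mpr
    (Finset.mem_union_left _ (Finset.mem_union_left _ (Finset.mem_union_right _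
      (Finset.mem_biUnion.mpr ⟨i, Finset.mem_univ i, hz⟩)))))
  choose η hηmem hηeq using fun j => hPg j B (hPgB j)
  choose ξ' hξ' using fun i => hPξ i B (hPξB i)
  set f' : ι → ↥B := fun i => ⟨f i, hfmem i⟩ with hf'def
  set c' : Fin n → ↥B := fun j => ⟨c j, hcmem j⟩ with hc'def
  have key : (∑ i, f' i • ξ' i) = ∑ j, c' j • η j := by
    apply finsuppAlgMap_injective (↥B) A' Subtype.val_injective
    rw [map_sum, map_sum]
    have h1 : ∀ i, finsuppAlgMap (↥B) A' (f' i • ξ' i) = f i • ξ i := fun i => by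
      rw [LinearMap.map_smul, hξ', ← algebraMap_smul A' (f' i) (ξ i)]
      rfl
    have h2 : ∀ j, finsuppAlgMap (↥B) A' (c' j • η j) = c j • (g j : A' →₀ A') := fun j => by
      rw [LinearMap.map_smul, hηeq, ← algebraMap_smul A' (c' j) (g j : A' →₀ A')]
      rfl
    simp only [h1, h2]
    exact hcg.symm
  have hrelmem : (∑ i, f' i • ξ' i) ∈ KaehlerDifferential.kerTotal A ↥B := by
    rw [key]
    exact Submodule.sum_smul_mem _ _ (fun j _ => hηmem j)
  refine ⟨B, hft, f',
    fun i => Finsupp.linearCombination (↥B) (KaehlerDifferential.D A ↥B) (ξ' i),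
    fun i => rfl, fun i => ?_, ?_⟩
  · rw [kaehlerMap_linearCombination, hξ', hξ]
  · have : ∑ i, f' i • Finsupp.linearCombination (↥B) (KaehlerDifferential.D A ↥B) (ξ' i) =
        Finsupp.linearCombination (↥B) (KaehlerDifferential.D A ↥B) (∑ i, f' i • ξ' i) := by
      rw [map_sum]
      simp only [map_smul]
    rw [this, ← LinearMap.mem_ker, KaehlerDifferential.kerTotal_eq]
    exact hrelmem

end Stage

/-- Let `u : A → A'` be a flat morphism of Noetherian rings such that the conclusion of
General Neron Desingularization holds: every `A`-morphism from a finite type `A`-algebra `B`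
to `A'` factors through a smooth `A`-algebra. Then `Ω_{A'/A}` is a flat `A'`-module. -/
theorem kaehler_flat_of_GND (A A' : Type u) [CommRing A] [CommRing A']
    [IsNoetherianRing A] [IsNoetherianRing A'] [Algebra A A'] [Module.Flat A A']
    (hGND : ∀ (B : Type u) [CommRing B] [Algebra A B], Algebra.FiniteType A B →
      ∀ v : B →ₐ[A] A', ∃ (C : Type u) (_ : CommRing C) (_ : Algebra A C),
        Algebra.Smooth A C ∧ ∃ (s : B →ₐ[A] C) (t : C →ₐ[A] A'), t.comp s = v) :
    Module.Flat A' (Ω[A'⁄A]) := by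
  classical
  apply Module.Flat.of_forall_isTrivialRelation
  intro ι f x hfx
  obtain ⟨B, hBft, f', ω, hf', hω, hrel⟩ := stage A A' f x hfx
  obtain ⟨C, _, _, hC, s, t, hts⟩ := hGND (↥B) hBft B.val
  letI : Algebra (↥B) C := s.toRingHom.toAlgebra
  haveI : IsScalarTower A (↥B) C := IsScalarTower.of_algebraMap_eq fun a => (s.commutes a).symm
  letI : Algebra C A' := t.toRingHom.toAlgebra
  haveI : IsScalarTower A C A' := IsScalarTower.of_algebraMap_eq fun a => (t.commutes a).symm
  haveI : IsScalarTower (↥B) C A' := IsScalarTower.of_algebraMap_eq fun b => by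
    have := AlgHom.congr_fun hts b
    exact this.symm
  haveI := hC.formallySmooth
  set θ : Fin ι → Ω[C⁄A] := fun i => KaehlerDifferential.map A A (↥B) C (ω i) with hθdef
  set z : Fin ι → A' ⊗[C] Ω[C⁄A] := fun i => (1 : A') ⊗ₜ[C] θ i with hzdef
  have hθrel : ∑ i, algebraMap (↥B) C (f' i) • θ i = 0 := by
    have h0 : ∀ i, algebraMap (↥B) C (f' i) • θ i =
        KaehlerDifferential.map A A (↥B) C (f' i • ω i) := fun i => by
      rw [LinearMap.map_smul, algebraMap_smul]
    simp only [h0]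
    rw [← map_sum, hrel, map_zero]
  have hz : ∑ i, f i • z i = 0 := by
    have h1 : ∀ i, f i • z i = (1 : A') ⊗ₜ[C] (algebraMap (↥B) C (f' i) • θ i) := fun i => by
      have hfi : f i = algebraMap C A' (algebraMap (↥B) C (f' i)) := by
        rw [← IsScalarTower.algebraMap_apply]
        exact (hf' i).symm
      simp only [hzdef]
      rw [TensorProduct.tmul_smul, hfi, algebraMap_smul]
    rw [Finset.sum_congr rfl (fun i _ => h1 i), ← TensorProduct.tmul_sum, hθrel,
      TensorProduct.tmul_zero]
  haveI hflatC : Module.Flat C (Ω[C⁄A]) := inferInstance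
  haveI hflatN : Module.Flat A' (A' ⊗[C] Ω[C⁄A]) := inferInstance
  obtain ⟨κ, a, y, hy, ha⟩ := Module.Flat.isTrivialRelation_of_sum_smul_eq_zero (f := f) (x := z) hz
  refine ⟨κ, a, fun j => KaehlerDifferential.mapBaseChange A C A' (y j), fun i => ?_, ha⟩
  have hxz : KaehlerDifferential.mapBaseChange A C A' (z i) = x i := by
    simp only [hzdef]
    rw [KaehlerDifferential.mapBaseChange_tmul, one_smul]
    simp only [hθdef]
    rw [kaehlerMap_comp]
    exact hω i
  rw [← hxz, hy i, map_sum]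
  simp only [map_smul]
end

section
/- Let K be a field whose ring of algebraic power series K⟨x₁,...,x_m⟩ satisfies the nested Artin approximation property. Then the Weierstrass Preparation Theorem holds in K⟨x⟩: if f ∈ K⟨x⟩ satisfies f(0,...,0,x_m) ≠ 0, with p the x_m-order of f(0,...,0,x_m), then there exist a unit y ∈ K⟨x⟩ and a monic polynomial g = x_m^p + Σ_{i<p} z_i x_m^i with z_i ∈ (x₁,...,x_{m−1})K⟨x₁,...,x_{m−1}⟩ such that f = y·g. -/
noncomputable section

variable (K : Type*) [Field K] (m : ℕ)

/-- A power series is algebraic (i.e. lies in the ring `K⟨x⟩` of algebraic power series) if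
it is algebraic over the polynomial ring `K[x]`. -/
def IsAlgSeries (f : MvPowerSeries (Fin (m + 1)) K) : Prop :=
  ∃ P : Polynomial (MvPolynomial (Fin (m + 1)) K), P ≠ 0 ∧
    Polynomial.eval₂ MvPolynomial.coeToMvPowerSeries.ringHom f P = 0

/-- A power series depends only on the variables `x₀,…,x_{s-1}`. -/
def OnlyVars (s : ℕ) (f : MvPowerSeries (Fin (m + 1)) K) : Prop :=
  ∀ d : Fin (m + 1) →₀ ℕ, (∃ i : Fin (m + 1), s ≤ (i : ℕ) ∧ d i ≠ 0) →
    MvPowerSeries.coeff d f = 0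

/-- Two power series are congruent modulo `(x)^c`. -/
def CongrModDeg (c : ℕ) (f g : MvPowerSeries (Fin (m + 1)) K) : Prop :=
  ∀ d : Fin (m + 1) →₀ ℕ, (∑ i, d i) < c →
    MvPowerSeries.coeff d f = MvPowerSeries.coeff d g

/-- The nested Artin approximation property for the ring of algebraic power series in
`m + 1` variables over `K`: a system of polynomial equations with algebraic power series
coefficients having a nested formal solution has a nested algebraic solution congruent to
the formal one to any prescribed order. -/
def NestedArtinApprox : Prop :=
  ∀ (n q : ℕ) (F : Fin q → MvPolynomial (Fin n) (MvPowerSeries (Fin (m + 1)) K)),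
    (∀ i d, IsAlgSeries K m (MvPolynomial.coeff d (F i))) →
    ∀ (s : Fin n → ℕ) (yh : Fin n → MvPowerSeries (Fin (m + 1)) K),
      (∀ i, MvPolynomial.aeval yh (F i) = 0) →
      (∀ i, OnlyVars K m (s i) (yh i)) →
      ∀ c : ℕ, ∃ y : Fin n → MvPowerSeries (Fin (m + 1)) K,
        (∀ i, MvPolynomial.aeval y (F i) = 0) ∧
        (∀ i, IsAlgSeries K m (y i)) ∧
        (∀ i, OnlyVars K m (s i) (y i)) ∧
        ∀ i, CongrModDeg K m c (y i) (yh i)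


namespace WPAux
open MvPowerSeries Finsupp

variable {K : Type*} [Field K] {m : ℕ}

def wt {m : ℕ} (D : Fin (m + 1) →₀ ℕ) : ℕ := ∑ i : Fin m, D i.castSucc

lemma wt_add (D E : Fin (m + 1) →₀ ℕ) : wt (D + E) = wt D + wt E := by
  simp [wt, Finset.sum_add_distrib]

lemma wt_single_last (k : ℕ) : wt (single (Fin.last m) k) = 0 := by
  simp only [wt]
  refine Finset.sum_eq_zero fun i _ => ?_
  rw [single_apply, if_neg (by exact fun h => (Fin.castSucc_lt_last i).ne' h)]

lemma eq_single_of_wt_eq_zero {F : Fin (m + 1) →₀ ℕ} (h : wt F = 0) :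
    F = single (Fin.last m) (F (Fin.last m)) := by
  ext j
  induction j using Fin.lastCases with
  | last => simp
  | cast i =>
    have h0 : F i.castSucc = 0 := Finset.sum_eq_zero_iff.mp h i (Finset.mem_univ i)
    rw [h0, single_apply, if_neg (by exact fun h => (Fin.castSucc_lt_last i).ne' h)]

variable (f : MvPowerSeries (Fin (m + 1)) K) (p : ℕ)

def U (D : Fin (m + 1) →₀ ℕ) : K :=
  (MvPowerSeries.coeff (single (Fin.last m) p) f)⁻¹ *
    (MvPowerSeries.coeff (D + single (Fin.last m) p)
        ((MvPowerSeries.X (Fin.last m) : MvPowerSeries (Fin (m + 1)) K) ^ p) -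
      ∑ EF ∈ (Finset.HasAntidiagonal.antidiagonal (D + single (Fin.last m) p)).attach,
        if h : 0 < wt EF.1.2 ∨ p < EF.1.2 (Fin.last m) then
          U EF.1.1 * MvPowerSeries.coeff EF.1.2 f
        else 0)
termination_by D (Fin.last m) + (p + 1) * wt D
decreasing_by
  have hmem := EF.2
  rw [Finset.HasAntidiagonal.mem_antidiagonal] at hmem
  have hw : wt EF.1.1 + wt EF.1.2 = wt D := by
    have := congrArg wt hmem
    rwa [wt_add, wt_add, wt_single_last, add_zero] at this
  have hl : EF.1.1 (Fin.last m) + EF.1.2 (Fin.last m) = D (Fin.last m) + p := by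
    have := congrArg (fun G : Fin (m+1) →₀ ℕ => G (Fin.last m)) hmem
    simpa using this
  rcases h with h | h
  · have h2 : (p + 1) * (wt EF.1.1 + 1) ≤ (p + 1) * wt D :=
      Nat.mul_le_mul_left _ (by omega)
    rw [Nat.mul_add, Nat.mul_one] at h2
    omega
  · have h2 : (p + 1) * wt EF.1.1 ≤ (p + 1) * wt D :=
      Nat.mul_le_mul_left _ (by omega)
    omega

/-- the candidate inverse unit -/
def u : MvPowerSeries (Fin (m + 1)) K := fun D => U f p D

lemma coeff_u (D : Fin (m + 1) →₀ ℕ) : MvPowerSeries.coeff D (u f p) = U f p D := rfl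

lemma U_eq (D : Fin (m + 1) →₀ ℕ) :
    U f p D = (MvPowerSeries.coeff (single (Fin.last m) p) f)⁻¹ *
    (MvPowerSeries.coeff (D + single (Fin.last m) p)
        ((MvPowerSeries.X (Fin.last m) : MvPowerSeries (Fin (m + 1)) K) ^ p) -
      ∑ EF ∈ Finset.HasAntidiagonal.antidiagonal (D + single (Fin.last m) p),
        if 0 < wt EF.2 ∨ p < EF.2 (Fin.last m) then
          U f p EF.1 * MvPowerSeries.coeff EF.2 f
        else 0) := by
  rw [U.eq_1]
  congr 1
  congr 1
  rw [← Finset.sum_attach (Finset.HasAntidiagonal.antidiagonal (D + single (Fin.last m) p))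
    (fun EF => if 0 < wt EF.2 ∨ p < EF.2 (Fin.last m) then
      U f p EF.1 * MvPowerSeries.coeff EF.2 f else 0)]
  exact Finset.sum_congr rfl fun x _ => by rw [dite_eq_ite]

variable {f p}
variable (hp : MvPowerSeries.coeff (single (Fin.last m) p) f ≠ 0)
variable (hplt : ∀ k < p, MvPowerSeries.coeff (single (Fin.last m) k) f = 0)

include hp hplt in
/-- key identity: for `G` with `p ≤ G (last m)`, `coeff G (u * f) = coeff G (X^p)` -/
lemma coeff_u_mul_f (G : Fin (m + 1) →₀ ℕ) (hG : p ≤ G (Fin.last m)) :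
    MvPowerSeries.coeff G (u f p * f) =
      MvPowerSeries.coeff G ((MvPowerSeries.X (Fin.last m) : MvPowerSeries (Fin (m + 1)) K) ^ p) := by
  classical
  set l := Fin.last m
  have hle : single l p ≤ G := Finsupp.single_le_iff.mpr hG
  set D := G - single l p with hD
  have hDG : D + single l p = G := tsub_add_cancel_of_le hle
  rw [MvPowerSeries.coeff_mul]
  have hsplit : ∀ EF : (Fin (m+1) →₀ ℕ) × (Fin (m+1) →₀ ℕ),
      MvPowerSeries.coeff EF.1 (u f p) * MvPowerSeries.coeff EF.2 f =
      (if 0 < wt EF.2 ∨ p < EF.2 l then U f p EF.1 * MvPowerSeries.coeff EF.2 f else 0) +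
      (if ¬ (0 < wt EF.2 ∨ p < EF.2 l) then U f p EF.1 * MvPowerSeries.coeff EF.2 f else 0) := by
    intro EF
    rw [coeff_u]
    split_ifs <;> simp
  rw [Finset.sum_congr rfl fun EF _ => hsplit EF, Finset.sum_add_distrib]
  have h2 : (∑ EF ∈ Finset.HasAntidiagonal.antidiagonal G,
      if ¬ (0 < wt EF.2 ∨ p < EF.2 l) then U f p EF.1 * MvPowerSeries.coeff EF.2 f else 0)
      = U f p D * MvPowerSeries.coeff (single l p) f := by
    have hmem : (D, single l p) ∈ Finset.HasAntidiagonal.antidiagonal G := by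
      rw [Finset.HasAntidiagonal.mem_antidiagonal]; exact hDG
    rw [Finset.sum_eq_single_of_mem (D, single l p) hmem ?_]
    · rw [if_pos]
      push_neg
      refine ⟨by rw [wt_single_last], by simp⟩
    · rintro ⟨E, F⟩ hEF hne
      rw [Finset.HasAntidiagonal.mem_antidiagonal] at hEF
      by_cases hc : 0 < wt F ∨ p < F l
      · rw [if_neg (not_not_intro hc)]
      · rw [if_pos hc]
        push_neg at hc
        obtain ⟨hw0, hlp⟩ := hc
        have hF : F = single l (F l) := eq_single_of_wt_eq_zero (by omega)
        rcases lt_or_eq_of_le hlp with hlt | hq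
        · rw [hF, hplt _ hlt, mul_zero]
        · exfalso
          apply hne
          have hF' : F = single l p := by rw [hF, hq]
          have h5 : E + single l p = D + single l p := by
            rw [hDG, ← hEF, hF']
          have h6 : E = D := add_right_cancel h5
          rw [Prod.mk.injEq]
          exact ⟨h6, hF'⟩
  rw [h2]
  have h3 : (∑ EF ∈ Finset.HasAntidiagonal.antidiagonal G,
      if 0 < wt EF.2 ∨ p < EF.2 l then U f p EF.1 * MvPowerSeries.coeff EF.2 f else 0)
      = ∑ EF ∈ Finset.HasAntidiagonal.antidiagonal (D + single l p),
      if 0 < wt EF.2 ∨ p < EF.2 l then U f p EF.1 * MvPowerSeries.coeff EF.2 f else 0 := by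
    rw [hDG]
  rw [h3]
  have h4 := U_eq f p D
  have ha : U f p D * MvPowerSeries.coeff (single l p) f =
      MvPowerSeries.coeff (D + single l p)
        ((MvPowerSeries.X l : MvPowerSeries (Fin (m + 1)) K) ^ p) -
      ∑ EF ∈ Finset.HasAntidiagonal.antidiagonal (D + single l p),
        if 0 < wt EF.2 ∨ p < EF.2 l then U f p EF.1 * MvPowerSeries.coeff EF.2 f else 0 := by
    rw [h4]
    field_simp
    exact mul_div_cancel_right₀ _ hp
  rw [ha, hDG]
  ring

include hplt in
lemma coeff_u_mul_f_small (G : Fin (m + 1) →₀ ℕ) (hw : wt G = 0) (hG : G (Fin.last m) < p) :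
    MvPowerSeries.coeff G (u f p * f) = 0 := by
  classical
  set l := Fin.last m
  rw [MvPowerSeries.coeff_mul]
  refine Finset.sum_eq_zero fun EF hEF => ?_
  rw [Finset.HasAntidiagonal.mem_antidiagonal] at hEF
  have hw2 : wt EF.1 + wt EF.2 = 0 := by rw [← hw, ← hEF, wt_add]
  have hl2 : EF.1 l + EF.2 l = G l := by
    have := congrArg (fun G : Fin (m+1) →₀ ℕ => G l) hEF
    simpa using this
  have hF : EF.2 = single l (EF.2 l) := eq_single_of_wt_eq_zero (by omega)
  rw [hF, hplt _ (by omega), mul_zero]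

include hp in
lemma U_zero : U f p 0 = (MvPowerSeries.coeff (single (Fin.last m) p) f)⁻¹ := by
  classical
  rw [U_eq]
  have h1 : MvPowerSeries.coeff ((0 : Fin (m+1) →₀ ℕ) + single (Fin.last m) p)
      ((MvPowerSeries.X (Fin.last m) : MvPowerSeries (Fin (m + 1)) K) ^ p) = 1 := by
    rw [zero_add, MvPowerSeries.coeff_X_pow, if_pos rfl]
  rw [h1]
  have h2 : (∑ EF ∈ Finset.HasAntidiagonal.antidiagonal ((0 : Fin (m+1) →₀ ℕ) + single (Fin.last m) p),
      if 0 < wt EF.2 ∨ p < EF.2 (Fin.last m) then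
        U f p EF.1 * MvPowerSeries.coeff EF.2 f else 0) = 0 := by
    refine Finset.sum_eq_zero fun EF hEF => ?_
    rw [Finset.HasAntidiagonal.mem_antidiagonal, zero_add] at hEF
    have hw2 : wt EF.1 + wt EF.2 = 0 := by
      rw [← wt_add, hEF, wt_single_last]
    have hl2 : EF.1 (Fin.last m) + EF.2 (Fin.last m) = p := by
      have := congrArg (fun G : Fin (m+1) →₀ ℕ => G (Fin.last m)) hEF
      simpa using this
    rw [if_neg (by push_neg; omega)]
  rw [h2, sub_zero, mul_one]

include hp in
lemma constCoeff_u : MvPowerSeries.constantCoeff (u f p) =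
    (MvPowerSeries.coeff (single (Fin.last m) p) f)⁻¹ := by
  rw [← MvPowerSeries.coeff_zero_eq_constantCoeff_apply, coeff_u, U_zero hp]

variable (f p)

/-- the coefficients z_i of the distinguished polynomial -/
def zF (i : ℕ) : MvPowerSeries (Fin (m + 1)) K := fun E =>
  if E (Fin.last m) = 0 then
    MvPowerSeries.coeff (E + single (Fin.last m) i) (u f p * f) else 0

lemma coeff_zF (i : ℕ) (E : Fin (m+1) →₀ ℕ) :
    MvPowerSeries.coeff E (zF f p i) =
    (if E (Fin.last m) = 0 then
      MvPowerSeries.coeff (E + single (Fin.last m) i) (u f p * f) else 0) := rfl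

variable {f p}

include hp hplt in
lemma g_eq : u f p * f =
    (MvPowerSeries.X (Fin.last m) : MvPowerSeries (Fin (m + 1)) K) ^ p +
      ∑ i : Fin p, zF f p i * (MvPowerSeries.X (Fin.last m)) ^ (i : ℕ) := by
  classical
  ext G
  rw [map_add, map_sum]
  have hXpow : ∀ i : ℕ, MvPowerSeries.coeff G (zF f p i * (MvPowerSeries.X (Fin.last m)) ^ i)
      = if single (Fin.last m) i ≤ G then
          MvPowerSeries.coeff (G - single (Fin.last m) i) (zF f p i) else 0 := by
    intro i
    rw [MvPowerSeries.X_pow_eq, MvPowerSeries.coeff_mul_monomial]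
    split_ifs <;> simp
  by_cases hG : p ≤ G (Fin.last m)
  · rw [coeff_u_mul_f hp hplt G hG]
    have : ∀ i : Fin p,
        MvPowerSeries.coeff G (zF f p i * (MvPowerSeries.X (Fin.last m)) ^ (i : ℕ)) = 0 := by
      intro i
      rw [hXpow]
      split_ifs with h
      · rw [coeff_zF, if_neg]
        rw [tsub_apply, Finsupp.single_eq_same]
        omega
      · rfl
    rw [Finset.sum_eq_zero fun i _ => this i, add_zero]
  · push_neg at hG
    have hXp : MvPowerSeries.coeff G
        ((MvPowerSeries.X (Fin.last m) : MvPowerSeries (Fin (m + 1)) K) ^ p) = 0 := by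
      rw [MvPowerSeries.coeff_X_pow, if_neg]
      intro h
      rw [h, Finsupp.single_eq_same] at hG
      omega
    rw [hXp, zero_add]
    set k : Fin p := ⟨G (Fin.last m), hG⟩ with hk
    rw [Finset.sum_eq_single_of_mem k (Finset.mem_univ k)]
    · rw [hXpow]
      have hle : single (Fin.last m) (k : ℕ) ≤ G := Finsupp.single_le_iff.mpr le_rfl
      rw [if_pos hle, coeff_zF,
        if_pos (by rw [tsub_apply, Finsupp.single_eq_same]; simp [hk]),
        tsub_add_cancel_of_le hle]
    · intro i _ hne
      rw [hXpow]
      split_ifs with h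
      · rw [coeff_zF, if_neg]
        rw [tsub_apply, Finsupp.single_eq_same]
        have hik : (i : ℕ) ≤ G (Fin.last m) := Finsupp.single_le_iff.mp h
        have : (i : ℕ) ≠ G (Fin.last m) := fun hh => hne (by ext; simp [hk, hh])
        omega
      · rfl

include hplt in
lemma constCoeff_zF (i : ℕ) (hi : i < p) :
    MvPowerSeries.constantCoeff (zF f p i) = 0 := by
  rw [← MvPowerSeries.coeff_zero_eq_constantCoeff_apply, coeff_zF, if_pos (by simp), zero_add,
    coeff_u_mul_f_small hplt _ (by rw [wt_single_last]) (by rw [Finsupp.single_eq_same]; exact hi)]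

lemma zF_vars (i : ℕ) (E : Fin (m+1) →₀ ℕ) (hE : E (Fin.last m) ≠ 0) :
    MvPowerSeries.coeff E (zF f p i) = 0 := by
  rw [coeff_zF, if_neg hE]

end WPAux


section Main

variable {K : Type*} [Field K] {m : ℕ}

lemma onlyVars_top (g : MvPowerSeries (Fin (m + 1)) K) : OnlyVars K m (m + 1) g := by
  intro d hd
  obtain ⟨j, hj, _⟩ := hd
  exact absurd hj (by omega)

lemma isAlgSeries_coe (q : MvPolynomial (Fin (m + 1)) K) :
    IsAlgSeries K m (MvPolynomial.coeToMvPowerSeries.ringHom q) :=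
  ⟨Polynomial.X - Polynomial.C q, Polynomial.X_sub_C_ne_zero q, by simp⟩

lemma aeval_map_coe {n : ℕ} (w : Fin n → MvPowerSeries (Fin (m + 1)) K)
    (P : MvPolynomial (Fin n) (MvPolynomial (Fin (m + 1)) K)) :
    MvPolynomial.aeval w (MvPolynomial.map (MvPolynomial.coeToMvPowerSeries.ringHom) P) =
      MvPolynomial.eval₂ MvPolynomial.coeToMvPowerSeries.ringHom w P := by
  rw [MvPolynomial.aeval_def, MvPolynomial.eval₂_map]
  congr 1

end Main

/-- The Weierstrass Preparation Theorem for algebraic power series, deduced from the nested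
Artin approximation property: if `f ∈ K⟨x⟩` with `f(0,…,0,x_m) ≠ 0` of `x_m`-order `p`, then
`f = y·g` with `y ∈ K⟨x⟩` a unit and `g = x_m^p + Σ_{i<p} z_i x_m^i` a monic polynomial whose
coefficients `z_i` are algebraic power series in `x₀,…,x_{m-1}` with zero constant term. -/


theorem weierstrass_preparation_of_nested (hN : NestedArtinApprox K m)
    (f : MvPowerSeries (Fin (m + 1)) K) (hf : IsAlgSeries K m f) (p : ℕ)
    (hp : MvPowerSeries.coeff (Finsupp.single (Fin.last m) p) f ≠ 0)
    (hplt : ∀ k < p, MvPowerSeries.coeff (Finsupp.single (Fin.last m) k) f = 0) :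
    ∃ (y : MvPowerSeries (Fin (m + 1)) K) (z : Fin p → MvPowerSeries (Fin (m + 1)) K),
      IsAlgSeries K m y ∧ IsUnit y ∧
      (∀ i, IsAlgSeries K m (z i) ∧ OnlyVars K m m (z i) ∧
        MvPowerSeries.constantCoeff (z i) = 0) ∧
      f = y * (MvPowerSeries.X (Fin.last m) ^ p +
        ∑ i : Fin p, z i * MvPowerSeries.X (Fin.last m) ^ (i : ℕ)) := by
  classical
  set uF : MvPowerSeries (Fin (m + 1)) K := WPAux.u f p with huF
  set yF : MvPowerSeries (Fin (m + 1)) K :=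
    MvPowerSeries.invOfUnit uF
      (Units.mk0 (MvPowerSeries.coeff (Finsupp.single (Fin.last m) p) f)⁻¹
        (inv_ne_zero hp)) with hyF
  have huy : uF * yF = 1 :=
    MvPowerSeries.mul_invOfUnit uF _ (by rw [huF, WPAux.constCoeff_u hp]; rfl)
  -- the polynomial system
  set G₀ : MvPolynomial (Fin (p + 2)) (MvPolynomial (Fin (m + 1)) K) :=
    MvPolynomial.X 0 * (MvPolynomial.C (MvPolynomial.X (Fin.last m) ^ p) +
      ∑ i : Fin p, MvPolynomial.X i.succ.succ *
        MvPolynomial.C (MvPolynomial.X (Fin.last m) ^ (i : ℕ))) with hG₀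
  set F : Fin 2 → MvPolynomial (Fin (p + 2)) (MvPowerSeries (Fin (m + 1)) K) :=
    ![MvPolynomial.C f - MvPolynomial.map MvPolynomial.coeToMvPowerSeries.ringHom G₀,
      MvPolynomial.map MvPolynomial.coeToMvPowerSeries.ringHom
        (MvPolynomial.X 0 * MvPolynomial.X 1 - 1)] with hF
  have haeval : ∀ w : Fin (p + 2) → MvPowerSeries (Fin (m + 1)) K,
      MvPolynomial.aeval w (F 0) = f - w 0 * (MvPowerSeries.X (Fin.last m) ^ p +
        ∑ i : Fin p, w i.succ.succ * MvPowerSeries.X (Fin.last m) ^ (i : ℕ)) ∧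
      MvPolynomial.aeval w (F 1) = w 0 * w 1 - 1 := by
    intro w
    constructor
    · have : F 0 = MvPolynomial.C f -
          MvPolynomial.map MvPolynomial.coeToMvPowerSeries.ringHom G₀ := by
        rw [hF]; rfl
      rw [this, map_sub, MvPolynomial.aeval_C, aeval_map_coe, hG₀]
      simp only [← MvPolynomial.coe_eval₂Hom, map_mul, map_add, map_sum,
        MvPolynomial.eval₂Hom_X', MvPolynomial.eval₂Hom_C,
        MvPolynomial.coeToMvPowerSeries.ringHom_apply, MvPolynomial.coe_pow,
        MvPolynomial.coe_X]
      rw [Algebra.algebraMap_self_apply]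
    · have : F 1 = MvPolynomial.map MvPolynomial.coeToMvPowerSeries.ringHom
          (MvPolynomial.X 0 * MvPolynomial.X 1 - 1) := by
        rw [hF]; rfl
      rw [this, aeval_map_coe]
      simp only [← MvPolynomial.coe_eval₂Hom, map_sub, map_mul, map_one,
        MvPolynomial.eval₂Hom_X']
  have hcoeffs : ∀ i d, IsAlgSeries K m (MvPolynomial.coeff d (F i)) := by
    intro i d
    fin_cases i
    · show IsAlgSeries K m (MvPolynomial.coeff d (MvPolynomial.C f -
        MvPolynomial.map MvPolynomial.coeToMvPowerSeries.ringHom G₀))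
      rw [MvPolynomial.coeff_sub, MvPolynomial.coeff_map]
      by_cases hd : d = 0
      · subst hd
        have hG0 : MvPolynomial.coeff 0 G₀ = 0 := by
          have h0 : MvPolynomial.constantCoeff G₀ = 0 := by
            rw [hG₀]; simp
          simpa [MvPolynomial.constantCoeff_eq] using h0
        rw [hG0, MvPolynomial.coeff_C, if_pos rfl]
        simpa using hf
      · rw [MvPolynomial.coeff_C, if_neg (fun h => hd h.symm)]
        have := isAlgSeries_coe (-MvPolynomial.coeff d G₀)
        rw [map_neg] at this
        simpa using this
    · show IsAlgSeries K m (MvPolynomial.coeff d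
        (MvPolynomial.map MvPolynomial.coeToMvPowerSeries.ringHom
          (MvPolynomial.X 0 * MvPolynomial.X 1 - 1)))
      rw [MvPolynomial.coeff_map]
      exact isAlgSeries_coe _
  set wh : Fin (p + 2) → MvPowerSeries (Fin (m + 1)) K :=
    Fin.cons yF (Fin.cons uF fun i : Fin p => WPAux.zF f p (i : ℕ)) with hwh
  have hwh0 : wh 0 = yF := rfl
  have hwh1 : wh 1 = uF := rfl
  have hwhs : ∀ i : Fin p, wh i.succ.succ = WPAux.zF f p (i : ℕ) := by
    intro i
    rw [hwh, Fin.cons_succ, Fin.cons_succ]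
  have hsol : ∀ i : Fin 2, MvPolynomial.aeval wh (F i) = 0 := by
    intro i
    fin_cases i
    · show MvPolynomial.aeval wh (F 0) = 0
      rw [(haeval wh).1, hwh0]
      have hsum : (∑ i : Fin p, wh i.succ.succ * MvPowerSeries.X (Fin.last m) ^ (i : ℕ))
          = ∑ i : Fin p, WPAux.zF f p (i : ℕ) * MvPowerSeries.X (Fin.last m) ^ (i : ℕ) :=
        Finset.sum_congr rfl fun i _ => by rw [hwhs]
      rw [hsum, ← WPAux.g_eq hp hplt]
      rw [show yF * (uF * f) = (uF * yF) * f by ring, huy, one_mul, sub_self]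
    · show MvPolynomial.aeval wh (F 1) = 0
      rw [(haeval wh).2, hwh0, hwh1]
      rw [mul_comm] at huy
      rw [huy, sub_self]
  set s : Fin (p + 2) → ℕ := Fin.cons (m + 1) (Fin.cons (m + 1) fun _ => m) with hs
  have hvars : ∀ i, OnlyVars K m (s i) (wh i) := by
    intro i
    induction i using Fin.cases with
    | zero => exact onlyVars_top _
    | succ j =>
      induction j using Fin.cases with
      | zero => exact onlyVars_top _
      | succ i' =>
        have h1 : s i'.succ.succ = m := rfl
        rw [h1, hwhs]
        intro d hd
        obtain ⟨j, hj, hdj⟩ := hd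
        have hj2 : j = Fin.last m := by
          have := j.isLt
          exact Fin.ext (by rw [Fin.val_last]; omega)
        rw [hj2] at hdj
        exact WPAux.zF_vars _ _ hdj
  obtain ⟨w, hw1, hw2, hw3, hw4⟩ := hN (p + 2) 2 F hcoeffs s wh hsol hvars 1
  refine ⟨w 0, fun i => w i.succ.succ, hw2 0, ?_, ?_, ?_⟩
  · have h1 := hw1 1
    rw [(haeval w).2, sub_eq_zero] at h1
    exact IsUnit.of_mul_eq_one _ h1
  · intro i
    refine ⟨hw2 _, ?_, ?_⟩
    · have := hw3 i.succ.succ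
      rwa [show s i.succ.succ = m from rfl] at this
    · have hc := hw4 i.succ.succ 0 (by simp)
      rw [← MvPowerSeries.coeff_zero_eq_constantCoeff_apply, hc, hwhs,
        MvPowerSeries.coeff_zero_eq_constantCoeff_apply]
      exact WPAux.constCoeff_zF hplt (i : ℕ) i.isLt
  · have h0 := hw1 0
    rw [(haeval w).1, sub_eq_zero] at h0
    exact h0

end
end

section
/- Let (A, m) be a Noetherian local ring, B = A[Y]/I a finite type A-algebra, f = (f₁,...,f_r) a system of polynomials in I with r ≤ n, M an r×r minor of the Jacobian matrix (∂f_i/∂Y_j), and N ∈ ((f) : I). For any A-algebra morphism v : B → A' into a local A-algebra A', if v(MN) is a unit in A', then B is essentially smooth over A at the prime ker(A' → A'/m_{A'}) pulled back to B; equivalently, P = MN + I lies in the ideal H_{B/A} measuring the smooth locus. -/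
open IsLocalRing MvPolynomial

universe u

variable (A : Type u) [CommRing A]

/-- The ideal `Δ_f` generated by all `r×r` minors of the Jacobian matrix of
`f = (f₁,…,f_r)`. -/
noncomputable def jacobianMinors {n r : ℕ} (f : Fin r → MvPolynomial (Fin n) A) :
    Ideal (MvPolynomial (Fin n) A) :=
  Ideal.span { M | ∃ ρ : Fin r → Fin n, Function.Injective ρ ∧
    M = (Matrix.of fun i j : Fin r => pderiv (ρ j) (f i)).det }

/-- The ideal `H_{B/A}` (up to radical) of `B = A[Y₁,…,Y_n]/I` measuring the non-smooth
locus of `B` over `A`: the radical of `Σ_f ((f):I)·Δ_f·B`, the sum over all systems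
`f = (f₁,…,f_r)` from `I` with `r ≤ n`. -/
noncomputable def smoothLocusIdeal (n : ℕ) (I : Ideal (MvPolynomial (Fin n) A)) :
    Ideal (MvPolynomial (Fin n) A ⧸ I) :=
  Ideal.radical (⨆ (r : ℕ) (_ : r ≤ n) (f : Fin r → MvPolynomial (Fin n) A)
    (_ : ∀ i, f i ∈ I),
      Ideal.map (Ideal.Quotient.mk I)
        ((Submodule.colon (Ideal.span (Set.range f)) I) * jacobianMinors A f))

/-- If `f = (f₁,…,f_r) ⊆ I`, `M` is an `r×r` minor of the Jacobian of `f`, `N ∈ ((f):I)`,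
and `v : B → A'` is an `A`-morphism into a local ring with `v(MN)` a unit, then
`P = MN + I` lies in `H_{B/A}` and the prime of `B` pulled back from the maximal ideal of
`A'` does not contain `H_{B/A}`, i.e. `B` is essentially smooth over `A` there. -/
theorem smoothLocusIdeal_not_le_comap (n r : ℕ) (hr : r ≤ n)
    (I : Ideal (MvPolynomial (Fin n) A))
    (f : Fin r → MvPolynomial (Fin n) A) (hf : ∀ i, f i ∈ I)
    (ρ : Fin r → Fin n) (hρ : Function.Injective ρ)
    (N : MvPolynomial (Fin n) A) (hN : N ∈ Submodule.colon (Ideal.span (Set.range f)) I)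
    (A' : Type u) [CommRing A'] [IsLocalRing A'] [Algebra A A']
    (v : (MvPolynomial (Fin n) A ⧸ I) →ₐ[A] A')
    (hv : IsUnit (v (Ideal.Quotient.mk I
      ((Matrix.of fun i j : Fin r => pderiv (ρ j) (f i)).det * N)))) :
    Ideal.Quotient.mk I ((Matrix.of fun i j : Fin r => pderiv (ρ j) (f i)).det * N) ∈
      smoothLocusIdeal A n I ∧
    ¬ smoothLocusIdeal A n I ≤ Ideal.comap (v : (MvPolynomial (Fin n) A ⧸ I) →+* A')
      (maximalIdeal A') := by
  have hmem : Ideal.Quotient.mk I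
      ((Matrix.of fun i j : Fin r => pderiv (ρ j) (f i)).det * N) ∈
      smoothLocusIdeal A n I := by
    have h1 : Ideal.Quotient.mk I
        ((Matrix.of fun i j : Fin r => pderiv (ρ j) (f i)).det * N) ∈
        Ideal.map (Ideal.Quotient.mk I)
          ((Submodule.colon (Ideal.span (Set.range f)) I) * jacobianMinors A f) := by
      apply Ideal.mem_map_of_mem
      rw [mul_comm _ N]
      exact Ideal.mul_mem_mul hN (Ideal.subset_span ⟨ρ, hρ, rfl⟩)
    have h2 : Ideal.map (Ideal.Quotient.mk I)
          ((Submodule.colon (Ideal.span (Set.range f)) I) * jacobianMinors A f) ≤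
        (⨆ (r : ℕ) (_ : r ≤ n) (f : Fin r → MvPolynomial (Fin n) A)
          (_ : ∀ i, f i ∈ I),
            Ideal.map (Ideal.Quotient.mk I)
              ((Submodule.colon (Ideal.span (Set.range f)) I) * jacobianMinors A f)) :=
      le_iSup_of_le r (le_iSup_of_le hr (le_iSup_of_le f (le_iSup_of_le hf le_rfl)))
    exact Ideal.le_radical (h2 h1)
  refine ⟨hmem, fun hle => ?_⟩
  exact (notMem_maximalIdeal.mpr hv) (hle hmem)
end
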